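/- arXiv:1712.04005 — 9 statements merged into one kernel-verified Lean document; each statement's English description precedes it below -/
import Mathlib

section
/- Let A be a convex subset of a uniquely geodesic metric space X. If every local geodesic in A is a geodesic, then A satisfies the betweenness property: for any four pairwise distinct points x, y, z, w in A, if y lies on the geodesic segment [x,z] and z lies on the geodesic segment [y,w], then both y and z lie on the geodesic segment [x,w]. -/
open Set Filter Topology

/-- `γ` restricted to `[0, l]` is a geodesic (isometric embedding). -/
def IsGeodesicOn {X : Type*} [MetricSpace X] (γ : ℝ → X) (l : ℝ) : Prop :=
  ∀ s ∈ Set.Icc (0:ℝ) l, ∀ t ∈ Set.Icc (0:ℝ) l, dist (γ s) (γ t) = |s - t|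

/-- `γ` is a local geodesic on `[0, l]`: every parameter has a nontrivial closed
interval around it (containing it in its interior) on whose intersection with
`[0, l]` the map `γ` is a geodesic. -/
def IsLocalGeodesicOn {X : Type*} [MetricSpace X] (γ : ℝ → X) (l : ℝ) : Prop :=
  ∀ t ∈ Set.Icc (0:ℝ) l, ∃ a b : ℝ, a < t ∧ t < b ∧
    ∀ s ∈ Set.Icc a b ∩ Set.Icc (0:ℝ) l, ∀ s' ∈ Set.Icc a b ∩ Set.Icc (0:ℝ) l,
      dist (γ s) (γ s') = |s - s'|

/-- The geodesic segment `[x,y]`, described via metric betweenness: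
`p ∈ [x,y]` iff `d(x,p) + d(p,y) = d(x,y)`. -/
def GeodSegment {X : Type*} [MetricSpace X] (x y : X) : Set X :=
  {p | dist x p + dist p y = dist x y}

/-- Every pair of points is joined by a geodesic, and it is unique. -/
def UniquelyGeodesic (X : Type*) [MetricSpace X] : Prop :=
  ∀ x y : X,
    (∃ γ : ℝ → X, γ 0 = x ∧ γ (dist x y) = y ∧ IsGeodesicOn γ (dist x y)) ∧
    ∀ γ₁ γ₂ : ℝ → X,
      γ₁ 0 = x → γ₁ (dist x y) = y → IsGeodesicOn γ₁ (dist x y) →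
      γ₂ 0 = x → γ₂ (dist x y) = y → IsGeodesicOn γ₂ (dist x y) →
      ∀ t ∈ Set.Icc (0:ℝ) (dist x y), γ₁ t = γ₂ t

/-- `A` is (geodesically) convex: it contains the geodesic segment between any
two of its points. -/
def GeodConvex {X : Type*} [MetricSpace X] (A : Set X) : Prop :=
  ∀ x ∈ A, ∀ y ∈ A, GeodSegment x y ⊆ A

/-- `γ` is a local geodesic on `[0, l]` lying in `A`. -/
def LocalGeodesicIn {X : Type*} [MetricSpace X] (A : Set X) (γ : ℝ → X) (l : ℝ) : Prop :=
  IsLocalGeodesicOn γ l ∧ ∀ t ∈ Set.Icc (0:ℝ) l, γ t ∈ A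

/-- `A` is strongly convex: it is convex, and there is no local geodesic in `A`
joining two of its points other than the geodesic segment (i.e. the image of any
local geodesic in `A` is exactly the geodesic segment between its endpoints). -/
def StronglyConvexSet {X : Type*} [MetricSpace X] (A : Set X) : Prop :=
  GeodConvex A ∧ ∀ (γ : ℝ → X) (l : ℝ), 0 ≤ l → LocalGeodesicIn A γ l →
    γ '' Set.Icc (0:ℝ) l = GeodSegment (γ 0) (γ l)

/-- The betweenness property for `A`. -/
def BetweennessProperty {X : Type*} [MetricSpace X] (A : Set X) : Prop :=
  ∀ x ∈ A, ∀ y ∈ A, ∀ z ∈ A, ∀ w ∈ A,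
    x ≠ y → x ≠ z → x ≠ w → y ≠ z → y ≠ w → z ≠ w →
    y ∈ GeodSegment x z → z ∈ GeodSegment y w →
    y ∈ GeodSegment x w ∧ z ∈ GeodSegment x w

/-- A geodesic ray contained in `A`. -/
def GeodesicRayIn {X : Type*} [MetricSpace X] (A : Set X) (γ : ℝ → X) : Prop :=
  (∀ t : ℝ, 0 ≤ t → γ t ∈ A) ∧
  ∀ s t : ℝ, 0 ≤ s → 0 ≤ t → dist (γ s) (γ t) = |s - t|

/-- The rules of the discrete Lion-Man game with jump bound `D` played in `A`. -/
def LionManRules {X : Type*} [MetricSpace X] (A : Set X) (D : ℝ) (L M : ℕ → X) : Prop :=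
  L 0 ∈ A ∧ (∀ i, M i ∈ A) ∧
  (∀ i, L (i+1) ∈ GeodSegment (L i) (M i)) ∧
  (∀ i, dist (L i) (L (i+1)) = min D (dist (L i) (M i))) ∧
  (∀ i, dist (M i) (M (i+1)) ≤ D)

/-- The lion wins: `d(L_{i+1}, M_i) → 0`. -/
def LionWins {X : Type*} [MetricSpace X] (L M : ℕ → X) : Prop :=
  Filter.Tendsto (fun i => dist (L (i+1)) (M i)) Filter.atTop (nhds 0)

lemma concat_geod {X : Type*} [MetricSpace X] (α β : ℝ → X) (l1 l2 : ℝ)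
    (h1 : 0 ≤ l1) (h2 : 0 ≤ l2)
    (hα : IsGeodesicOn α l1) (hβ : IsGeodesicOn β l2)
    (hj : α l1 = β 0) (hd : dist (α 0) (β l2) = l1 + l2) :
    IsGeodesicOn (fun t => if t ≤ l1 then α t else β (t - l1)) (l1 + l2) := by
  have key : ∀ s ∈ Set.Icc (0:ℝ) (l1+l2), ∀ t ∈ Set.Icc (0:ℝ) (l1+l2), s ≤ t →
      dist ((fun t => if t ≤ l1 then α t else β (t - l1)) s)
           ((fun t => if t ≤ l1 then α t else β (t - l1)) t) = t - s := by
    intro s hs t ht hst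
    simp only
    split_ifs with hh hh' hh'
    · rw [hα s ⟨hs.1, hh⟩ t ⟨ht.1, hh'⟩, abs_of_nonpos (by linarith)]; ring
    · push_neg at hh'
      have hub : dist (α s) (β (t - l1)) ≤ t - s := by
        calc dist (α s) (β (t - l1)) ≤ dist (α s) (α l1) + dist (β 0) (β (t-l1)) := by
              rw [hj]; exact dist_triangle _ _ _
          _ = t - s := by
              rw [hα s ⟨hs.1, hh⟩ l1 ⟨h1, le_refl _⟩,
                  hβ 0 ⟨le_refl _, h2⟩ (t - l1) ⟨by linarith, by linarith [ht.2]⟩,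
                  abs_of_nonpos (by linarith), abs_of_nonpos (by linarith)]
              ring
      have hlb : t - s ≤ dist (α s) (β (t - l1)) := by
        have h4 := dist_triangle4 (α 0) (α s) (β (t - l1)) (β l2)
        rw [hd, hα 0 ⟨le_refl _, h1⟩ s ⟨hs.1, hh⟩,
            hβ (t - l1) ⟨by linarith, by linarith [ht.2]⟩ l2 ⟨h2, le_refl _⟩,
            abs_of_nonpos (by linarith [hs.1]), abs_of_nonpos (by linarith [ht.2])] at h4
        linarith
      linarith
    · exact absurd (hst.trans hh') hh
    · push_neg at hh hh'
      rw [hβ (s - l1) ⟨by linarith, by linarith [hs.2]⟩ (t - l1)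
            ⟨by linarith, by linarith [ht.2]⟩,
          abs_of_nonpos (by linarith)]
      ring
  intro s hs t ht
  rcases le_total s t with hst | hst
  · rw [key s hs t ht hst, abs_of_nonpos (by linarith)]; ring
  · rw [dist_comm, key t ht s hs hst, abs_of_nonneg (by linarith)]

/-- If every local geodesic in a convex subset `A` of a uniquely
geodesic space is a geodesic, then `A` has the betweenness property. -/
theorem stmt1 {X : Type*} [MetricSpace X] (hX : UniquelyGeodesic X)
    (A : Set X) (hA : GeodConvex A)
    (h : ∀ (γ : ℝ → X) (l : ℝ), 0 ≤ l → LocalGeodesicIn A γ l → IsGeodesicOn γ l) :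
    BetweennessProperty A := by
  intro x hx y hy z hz w hw hxy hxz hxw hyz hyw hzw hyxz hzyw
  have hyxz' : dist x y + dist y z = dist x z := hyxz
  have hzyw' : dist y z + dist z w = dist y w := hzyw
  obtain ⟨α, hα0, hα1, hα⟩ := (hX x y).1
  obtain ⟨β, hβ0, hβ1, hβ⟩ := (hX y z).1
  obtain ⟨δ, hδ0, hδ1, hδ⟩ := (hX z w).1
  set a := dist x y with ha
  set b := dist y z with hb
  set c := dist z w with hc
  have ha0 : 0 < a := dist_pos.2 hxy
  have hb0 : 0 < b := dist_pos.2 hyz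
  have hc0 : 0 < c := dist_pos.2 hzw
  have hζ : IsGeodesicOn (fun t => if t ≤ a then α t else β (t - a)) (a + b) :=
    concat_geod α β a b ha0.le hb0.le hα hβ (by rw [hα1, hβ0])
      (by rw [hα0, hβ1]; linarith)
  have hε : IsGeodesicOn (fun t => if t ≤ b then β t else δ (t - b)) (b + c) :=
    concat_geod β δ b c hb0.le hc0.le hβ hδ (by rw [hβ1, hδ0])
      (by rw [hβ0, hδ1]; linarith)
  set ζ : ℝ → X := fun t => if t ≤ a then α t else β (t - a) with hζdef
  set ε : ℝ → X := fun t => if t ≤ b then β t else δ (t - b) with hεdef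
  set γ : ℝ → X := fun t =>
    if t ≤ a then α t else if t ≤ a + b then β (t - a) else δ (t - a - b) with hγdef
  have hγζ : ∀ t, t ≤ a + b → γ t = ζ t := by
    intro t ht
    simp only [hγdef, hζdef]
    split_ifs with h1 h2 <;> first | rfl | linarith
  have hγε : ∀ t, a ≤ t → γ t = ε (t - a) := by
    intro t ht
    simp only [hγdef, hεdef]
    split_ifs with h1 h2 h3 h4 h5 <;> try rfl
    · have : t = a := le_antisymm h1 ht
      subst this
      rw [sub_self, hβ0, hα1]
    · exfalso; push_neg at h2; linarith
    · exfalso; push_neg at h1; linarith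
    · exfalso; push_neg at h1 h3; linarith
  have hζ0 : ζ 0 = x := by
    simp only [hζdef]; rw [if_pos ha0.le, hα0]
  have hζL : ζ (a + b) = z := by
    simp only [hζdef]; rw [if_neg (by linarith)]
    have : a + b - a = b := by ring
    rw [this, hβ1]
  have hε0 : ε 0 = y := by
    simp only [hεdef]; rw [if_pos hb0.le, hβ0]
  have hεL : ε (b + c) = w := by
    simp only [hεdef]; rw [if_neg (by linarith)]
    have : b + c - b = c := by ring
    rw [this, hδ1]
  have hγ0 : γ 0 = x := by rw [hγζ 0 (by linarith), hζ0]
  have hγL : γ (a + b + c) = w := by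
    rw [hγε _ (by linarith)]
    have : a + b + c - a = b + c := by ring
    rw [this, hεL]
  have hloc : IsLocalGeodesicOn γ (a + b + c) := by
    intro t ht
    by_cases hcase : t < a + b
    · refine ⟨t - 1, (t + (a + b)) / 2, by linarith, by linarith, ?_⟩
      intro s hs s' hs'
      have hsb : s ≤ a + b := by linarith [hs.1.2]
      have hsb' : s' ≤ a + b := by linarith [hs'.1.2]
      rw [hγζ s hsb, hγζ s' hsb']
      exact hζ s ⟨hs.2.1, hsb⟩ s' ⟨hs'.2.1, hsb'⟩
    · push_neg at hcase
      refine ⟨(a + t) / 2, t + 1, by linarith, by linarith, ?_⟩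
      intro s hs s' hs'
      have has : a ≤ s := by linarith [hs.1.1]
      have has' : a ≤ s' := by linarith [hs'.1.1]
      rw [hγε s has, hγε s' has']
      have e := hε (s - a) ⟨by linarith, by linarith [hs.2.2]⟩ (s' - a)
        ⟨by linarith, by linarith [hs'.2.2]⟩
      rw [e]
      congr 1
      ring
  have hmem : ∀ t ∈ Set.Icc (0:ℝ) (a + b + c), γ t ∈ A := by
    intro t ht
    by_cases hcase : t ≤ a + b
    · rw [hγζ t hcase]
      apply hA x hx z hz
      show dist x (ζ t) + dist (ζ t) z = dist x z
      have h1 : dist x (ζ t) = t := by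
        rw [← hζ0, hζ 0 ⟨le_refl _, by linarith⟩ t ⟨ht.1, hcase⟩,
            abs_of_nonpos (by linarith [ht.1])]
        ring
      have h2 : dist (ζ t) z = a + b - t := by
        rw [← hζL, hζ t ⟨ht.1, hcase⟩ (a + b) ⟨by linarith, le_refl _⟩,
            abs_of_nonpos (by linarith)]
        ring
      rw [h1, h2]; linarith
    · push_neg at hcase
      rw [hγε t (by linarith)]
      apply hA y hy w hw
      show dist y (ε (t - a)) + dist (ε (t - a)) w = dist y w
      have hmem1 : t - a ∈ Set.Icc (0:ℝ) (b + c) := ⟨by linarith, by linarith [ht.2]⟩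
      have h1 : dist y (ε (t - a)) = t - a := by
        rw [← hε0, hε 0 ⟨le_refl _, by linarith⟩ (t - a) hmem1,
            abs_of_nonpos (by linarith [hmem1.1])]
        ring
      have h2 : dist (ε (t - a)) w = b + c - (t - a) := by
        rw [← hεL, hε (t - a) hmem1 (b + c) ⟨by linarith, le_refl _⟩,
            abs_of_nonpos (by linarith [hmem1.2])]
        ring
      rw [h1, h2]; linarith
  have hg : IsGeodesicOn γ (a + b + c) := h γ (a + b + c) (by linarith) ⟨hloc, hmem⟩
  have hxw' : dist x w = a + b + c := by
    have e := hg 0 ⟨le_refl _, by linarith⟩ (a + b + c) ⟨by linarith, le_refl _⟩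
    rw [hγ0, hγL, abs_of_nonpos (by linarith)] at e
    rw [e]; ring
  constructor
  · show dist x y + dist y w = dist x w
    rw [hxw']; linarith
  · show dist x z + dist z w = dist x w
    rw [hxw']; linarith
end

section
/- Let A be a convex subset of a uniquely geodesic metric space X satisfying the betweenness property. Then every local geodesic γ:[0,l]→A is a geodesic. -/
open Set Filter Topology

theorem key_from_zero {X : Type*} [MetricSpace X] {A : Set X}
    (hB : BetweennessProperty A) {γ : ℝ → X} {l : ℝ} (hl : 0 ≤ l)
    (hγ : LocalGeodesicIn A γ l) :
    ∀ t ∈ Set.Icc (0:ℝ) l, dist (γ 0) (γ t) = t := by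
  obtain ⟨hloc, hmem⟩ := hγ
  set S : Set ℝ :=
    {t | t ∈ Set.Icc (0:ℝ) l ∧ ∀ s ∈ Set.Icc (0:ℝ) t, dist (γ 0) (γ s) = s} with hSdef
  have h0S : (0:ℝ) ∈ S := by
    refine ⟨⟨le_refl 0, hl⟩, ?_⟩
    intro s hs
    have : s = 0 := le_antisymm hs.2 hs.1
    simp [this]
  have hbdd : BddAbove S := ⟨l, fun t ht => ht.1.2⟩
  set T := sSup S with hT
  have hTmem' : T ∈ Set.Icc (0:ℝ) l :=
    ⟨le_csSup hbdd h0S, csSup_le ⟨0, h0S⟩ fun t ht => ht.1.2⟩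
  have hprev : ∀ s, 0 ≤ s → s < T → dist (γ 0) (γ s) = s := by
    intro s hs0 hsT
    obtain ⟨t, htS, hst⟩ := exists_lt_of_lt_csSup ⟨0, h0S⟩ hsT
    exact htS.2 s ⟨hs0, hst.le⟩
  obtain ⟨a, b, haT, hTb, hiso⟩ := hloc T hTmem'
  have hTmem2 : T ∈ Set.Icc a b ∩ Set.Icc (0:ℝ) l := ⟨⟨haT.le, hTb.le⟩, hTmem'⟩
  have hfT : dist (γ 0) (γ T) = T := by
    rcases eq_or_lt_of_le hTmem'.1 with h | hTpos
    · simp [← h]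
    · have hm : max a 0 < T := max_lt haT hTpos
      have hkey : ∀ s, max a 0 < s → s < T →
          dist (γ 0) (γ T) ≤ T ∧ 2 * s - T ≤ dist (γ 0) (γ T) := by
        intro s h1 h2
        have hs0 : 0 ≤ s := (lt_of_le_of_lt (le_max_right a 0) h1).le
        have hsa : a ≤ s := (lt_of_le_of_lt (le_max_left a 0) h1).le
        have hsl : s ≤ l := h2.le.trans hTmem'.2
        have hd : dist (γ s) (γ T) = T - s := by
          have := hiso s ⟨⟨hsa, (h2.trans hTb).le⟩, hs0, hsl⟩ T hTmem2
          rw [this, abs_sub_comm, abs_of_nonneg (by linarith)]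
        have hfs : dist (γ 0) (γ s) = s := hprev s hs0 h2
        constructor
        · calc dist (γ 0) (γ T) ≤ dist (γ 0) (γ s) + dist (γ s) (γ T) :=
                dist_triangle _ _ _
            _ = T := by rw [hfs, hd]; ring
        · have h3 : dist (γ 0) (γ s) ≤ dist (γ 0) (γ T) + dist (γ T) (γ s) :=
            dist_triangle _ _ _
          rw [hfs, dist_comm (γ T) (γ s), hd] at h3
          linarith
      obtain ⟨hub, _⟩ := hkey ((max a 0 + T)/2) (by linarith) (by linarith)
      refine le_antisymm hub ?_
      by_contra hlt
      push_neg at hlt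
      set d := dist (γ 0) (γ T) with hdd
      have hs1 : max (max a 0) ((d + T)/2) < T := max_lt hm (by linarith)
      set s' := (max (max a 0) ((d + T)/2) + T) / 2 with hs'
      obtain ⟨_, hlb⟩ := hkey s'
        (lt_of_le_of_lt (le_max_left _ _) (by rw [hs']; linarith))
        (by rw [hs']; linarith)
      have hge : (d + T)/2 ≤ max (max a 0) ((d + T)/2) := le_max_right _ _
      rw [hs'] at hlb
      linarith
  have hTS : T ∈ S := by
    refine ⟨hTmem', ?_⟩
    intro s hs
    rcases eq_or_lt_of_le hs.2 with h | h
    · rw [h]; exact hfT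
    · exact hprev s hs.1 h
  have hTl : l ≤ T := by
    by_contra hc
    push_neg at hc
    have hTb' : T < min b l := lt_min hTb hc
    have hb'S : min b l ∈ S := by
      refine ⟨⟨hTmem'.1.trans hTb'.le, min_le_right _ _⟩, ?_⟩
      intro s hs
      rcases le_or_gt s T with hsT | hsT
      · exact hTS.2 s ⟨hs.1, hsT⟩
      · have hsa : a ≤ s := (haT.trans hsT).le
        have hsb : s ≤ b := hs.2.trans (min_le_left _ _)
        have hsl : s ≤ l := hs.2.trans (min_le_right _ _)
        have hsmem : s ∈ Set.Icc a b ∩ Set.Icc (0:ℝ) l := ⟨⟨hsa, hsb⟩, hs.1, hsl⟩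
        have hdTs : dist (γ T) (γ s) = s - T := by
          rw [hiso T hTmem2 s hsmem, abs_sub_comm, abs_of_nonneg (by linarith)]
        rcases eq_or_lt_of_le hTmem'.1 with hT0 | hT0
        · rw [← hT0] at hdTs
          rw [hdTs]; ring
        · obtain ⟨u, hu1, hu2⟩ : ∃ u, max a 0 < u ∧ u < T :=
            ⟨(max a 0 + T)/2, by linarith [max_lt haT hT0], by linarith [max_lt haT hT0]⟩
          have hu0 : 0 < u := lt_of_le_of_lt (le_max_right a 0) hu1
          have hua : a < u := lt_of_le_of_lt (le_max_left a 0) hu1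
          have hul : u ≤ l := hu2.le.trans hTmem'.2
          have humem : u ∈ Set.Icc a b ∩ Set.Icc (0:ℝ) l :=
            ⟨⟨hua.le, (hu2.trans hTb).le⟩, hu0.le, hul⟩
          have hfu : dist (γ 0) (γ u) = u := hprev u hu0.le hu2
          have hduT : dist (γ u) (γ T) = T - u := by
            rw [hiso u humem T hTmem2, abs_sub_comm, abs_of_nonneg (by linarith)]
          have hdus : dist (γ u) (γ s) = s - u := by
            rw [hiso u humem s hsmem, abs_sub_comm, abs_of_nonneg (by linarith)]
          have hne1 : γ 0 ≠ γ u := dist_pos.mp (by rw [hfu]; exact hu0)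
          have hne2 : γ 0 ≠ γ T := dist_pos.mp (by rw [hfT]; exact hT0)
          have hne4 : γ u ≠ γ T := dist_pos.mp (by rw [hduT]; linarith)
          have hne5 : γ u ≠ γ s := dist_pos.mp (by rw [hdus]; linarith)
          have hne6 : γ T ≠ γ s := dist_pos.mp (by rw [hdTs]; linarith)
          have hne3 : γ 0 ≠ γ s := by
            intro h
            have e1 : dist (γ u) (γ 0) = s - u := by rw [h]; exact hdus
            have e2 : dist (γ T) (γ 0) = s - T := by rw [h]; exact hdTs
            rw [dist_comm, hfu] at e1
            rw [dist_comm, hfT] at e2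
            linarith
          have hy : γ u ∈ GeodSegment (γ 0) (γ T) := by
            simp only [GeodSegment, Set.mem_setOf_eq]
            rw [hfu, hduT, hfT]; ring
          have hzin : γ T ∈ GeodSegment (γ u) (γ s) := by
            simp only [GeodSegment, Set.mem_setOf_eq]
            rw [hduT, hdTs, hdus]; ring
          obtain ⟨_, hz⟩ := hB (γ 0) (hmem 0 ⟨le_refl 0, hl⟩)
            (γ u) (hmem u ⟨hu0.le, hul⟩) (γ T) (hmem T hTmem')
            (γ s) (hmem s ⟨hs.1, hsl⟩) hne1 hne2 hne3 hne4 hne5 hne6 hy hzin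
          simp only [GeodSegment, Set.mem_setOf_eq] at hz
          rw [hfT, hdTs] at hz
          linarith
    have := le_csSup hbdd hb'S
    linarith
  intro t ht
  exact hTS.2 t ⟨ht.1, ht.2.trans hTl⟩

theorem key_pair {X : Type*} [MetricSpace X] {A : Set X}
    (hB : BetweennessProperty A) {γ : ℝ → X} {l : ℝ}
    (hγ : LocalGeodesicIn A γ l) {s t : ℝ}
    (hs : s ∈ Set.Icc (0:ℝ) l) (ht : t ∈ Set.Icc (0:ℝ) l) (hst : s ≤ t) :
    dist (γ s) (γ t) = t - s := by
  obtain ⟨hloc, hmem⟩ := hγ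
  have hshift : LocalGeodesicIn A (fun u => γ (s + u)) (l - s) := by
    constructor
    · intro t' ht'
      have h1 : s + t' ∈ Set.Icc (0:ℝ) l :=
        ⟨by linarith [hs.1, ht'.1], by linarith [ht'.2]⟩
      obtain ⟨a, b, ha, hb, hiso⟩ := hloc (s + t') h1
      refine ⟨a - s, b - s, by linarith, by linarith, ?_⟩
      intro u hu v hv
      have h2 : dist (γ (s+u)) (γ (s+v)) = |(s+u) - (s+v)| :=
        hiso (s+u)
          ⟨⟨by linarith [hu.1.1], by linarith [hu.1.2]⟩,
           by linarith [hu.2.1, hs.1], by linarith [hu.2.2]⟩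
          (s+v)
          ⟨⟨by linarith [hv.1.1], by linarith [hv.1.2]⟩,
           by linarith [hv.2.1, hs.1], by linarith [hv.2.2]⟩
      have h3 : (s+u) - (s+v) = u - v := by ring
      rw [h3] at h2
      exact h2
    · intro t' ht'
      exact hmem (s + t') ⟨by linarith [ht'.1, hs.1], by linarith [ht'.2]⟩
  have := key_from_zero hB (by linarith [ht.2, hs.1] : (0:ℝ) ≤ l - s) hshift
    (t - s) ⟨by linarith, by linarith [ht.2]⟩
  have e1 : s + (0:ℝ) = s := by ring
  have e2 : s + (t - s) = t := by ring
  rw [e1, e2] at this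
  exact this

/-- If a convex subset `A` of a uniquely geodesic space has the
betweenness property, then every local geodesic in `A` is a geodesic. -/
theorem stmt2 {X : Type*} [MetricSpace X] (hX : UniquelyGeodesic X)
    (A : Set X) (hA : GeodConvex A) (hB : BetweennessProperty A) :
    ∀ (γ : ℝ → X) (l : ℝ), 0 ≤ l → LocalGeodesicIn A γ l → IsGeodesicOn γ l := by
  intro γ l hl hγ s hs t ht
  rcases le_total s t with h | h
  · rw [key_pair hB hγ hs ht h, abs_sub_comm, abs_of_nonneg (by linarith)]
  · rw [dist_comm, key_pair hB hγ ht hs h, abs_of_nonneg (by linarith)]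
end

section
/- Let X be a uniquely geodesic metric space and suppose X contains a closed topological ray, i.e., a closed subset Γ⊆X homeomorphic to [0,∞). Then X does not have the fixed point property for continuous mappings: there exists a continuous map f:X→X without fixed points. -/
open Set Filter Topology

/-- A uniquely geodesic metric space containing a closed
topological ray fails the fixed point property for continuous mappings. -/
theorem stmt4 {X : Type*} [MetricSpace X] (hX : UniquelyGeodesic X)
    (Γ : Set X) (hclosed : IsClosed Γ)
    (hray : Nonempty ((Set.Ici (0:ℝ)) ≃ₜ Γ)) :
    ∃ f : X → X, Continuous f ∧ ∀ x : X, f x ≠ x := by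
  obtain ⟨h⟩ := hray
  -- The inverse homeomorphism as a real-valued continuous map on Γ
  set φ : C(Γ, ℝ) := ⟨fun y => ((h.symm y : Set.Ici (0:ℝ)) : ℝ),
    continuous_subtype_val.comp h.symm.continuous⟩ with hφ
  obtain ⟨G, hG⟩ := φ.exists_restrict_eq hclosed
  -- the extended map, shifted by 1 and pushed forward along h
  refine ⟨fun x => (h ⟨max (G x) 0 + 1, Set.mem_Ici.mpr (add_nonneg (le_max_right _ _) zero_le_one)⟩ : X), ?_, ?_⟩
  · apply continuous_subtype_val.comp
    apply h.continuous.comp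
    exact Continuous.subtype_mk (by continuity) _
  · intro x hx
    have hxΓ : x ∈ Γ := by rw [← hx]; exact (h _).2
    have h1 : h.symm ⟨x, hxΓ⟩ = ⟨max (G x) 0 + 1, Set.mem_Ici.mpr (add_nonneg (le_max_right _ _) zero_le_one)⟩ := by
      apply h.symm_apply_eq.mpr
      exact Subtype.ext hx.symm
    have h2 : G x = max (G x) 0 + 1 := by
      have h4 : G x = ((h.symm ⟨x, hxΓ⟩ : Set.Ici (0:ℝ)) : ℝ) := by
        have := DFunLike.congr_fun hG (⟨x, hxΓ⟩ : Γ)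
        simpa [hφ] using this
      rw [h1] at h4; exact h4
    have h3 : max (G x) 0 = G x := max_eq_left (by
      nlinarith [le_max_right (G x) (0:ℝ)])
    rw [h3] at h2
    linarith
end

section
/- Let A be a closed, convex subset of a complete, locally compact, uniquely geodesic metric space, and suppose A contains a geodesic ray γ:[0,∞)→A. Then the map f:A→A defined by f(x)=γ(d(γ(0),x)+1) is nonexpansive (hence continuous) and fixed point free. Consequently, A fails the fixed point property for continuous mappings. -/
open Set Filter Topology

/-- If a closed convex subset `A` of a complete, locally compact,
uniquely geodesic space contains a geodesic ray `γ`, then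
`f(x) = γ(d(γ(0),x) + 1)` is a nonexpansive, fixed-point-free self-map of `A`;
consequently `A` fails the fixed point property for continuous mappings. -/
theorem stmt7 {X : Type*} [MetricSpace X] [CompleteSpace X] [LocallyCompactSpace X]
    (hX : UniquelyGeodesic X)
    (A : Set X) (hclosed : IsClosed A) (hconv : GeodConvex A)
    (γ : ℝ → X) (hray : GeodesicRayIn A γ) :
    (∀ x ∈ A, γ (dist (γ 0) x + 1) ∈ A) ∧
    (∀ x y : X, dist (γ (dist (γ 0) x + 1)) (γ (dist (γ 0) y + 1)) ≤ dist x y) ∧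
    (∀ x ∈ A, γ (dist (γ 0) x + 1) ≠ x) ∧
    (∃ g : A → A, Continuous g ∧ ∀ a : A, g a ≠ a) := by
  obtain ⟨hmem, hiso⟩ := hray
  have hpos : ∀ x : X, (0:ℝ) ≤ dist (γ 0) x + 1 := fun x => by positivity
  have hne : ∀ x ∈ A, γ (dist (γ 0) x + 1) ≠ x := by
    intro x hx hfix
    have h0 : dist (γ 0) (γ (dist (γ 0) x + 1)) = |0 - (dist (γ 0) x + 1)| :=
      hiso 0 _ le_rfl (hpos x)
    rw [hfix] at h0
    have habs : |0 - (dist (γ 0) x + 1)| = dist (γ 0) x + 1 := by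
      rw [abs_sub_comm]; simp [abs_of_nonneg (hpos x)]
    rw [habs] at h0
    linarith
  have hlip : ∀ x y : X, dist (γ (dist (γ 0) x + 1)) (γ (dist (γ 0) y + 1)) ≤ dist x y := by
    intro x y
    rw [hiso _ _ (hpos x) (hpos y)]
    have h := abs_dist_sub_le x y (γ 0)
    rw [dist_comm x (γ 0), dist_comm y (γ 0)] at h
    calc |dist (γ 0) x + 1 - (dist (γ 0) y + 1)| = |dist (γ 0) x - dist (γ 0) y| := by
          ring_nf
      _ ≤ dist x y := h
  refine ⟨fun x _ => hmem _ (hpos x), hlip, hne, ?_⟩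
  refine ⟨fun a => ⟨γ (dist (γ 0) a + 1), hmem _ (hpos a)⟩, ?_, ?_⟩
  · have : LipschitzWith 1 (fun a : A => (⟨γ (dist (γ 0) a + 1), hmem _ (hpos a)⟩ : A)) :=
      LipschitzWith.of_dist_le_mul (fun a b => by
        simpa [Subtype.dist_eq, one_mul] using hlip a b)
    exact this.continuous
  · intro a h
    exact hne a a.2 (congrArg Subtype.val h)
end

section
/- A closed convex subset A of a complete, locally compact, uniquely geodesic metric space is noncompact if and only if A contains a geodesic ray. -/
open Set Filter Topology

open Metric

/-- Point at distance `t` along the geodesic from `x` to `y`. -/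
lemma exists_point_at {X : Type*} [MetricSpace X] (hX : UniquelyGeodesic X)
    (x y : X) {t : ℝ} (ht : t ∈ Set.Icc (0:ℝ) (dist x y)) :
    ∃ z : X, dist x z = t ∧ dist z y = dist x y - t := by
  obtain ⟨γ, h0, hd, hg⟩ := (hX x y).1
  refine ⟨γ t, ?_, ?_⟩
  · have := hg 0 ⟨le_refl 0, dist_nonneg⟩ t ht
    rw [h0] at this
    rw [this, zero_sub, abs_neg, abs_of_nonneg ht.1]
  · have := hg t ht (dist x y) ⟨dist_nonneg, le_refl _⟩
    rw [hd] at this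
    rw [this, abs_of_nonpos (by linarith [ht.2]), neg_sub]

/-- Hopf–Rinow: closed balls are compact. -/
lemma ball_compact {X : Type*} [MetricSpace X] [CompleteSpace X] [LocallyCompactSpace X]
    (hX : UniquelyGeodesic X) (x₀ : X) (r : ℝ) :
    IsCompact (Metric.closedBall x₀ r) := by
  -- local compactness: small closed balls are compact
  have loc : ∀ z : X, ∃ δ > (0:ℝ), IsCompact (closedBall z δ) := by
    intro z
    obtain ⟨s, hsc, hs⟩ := exists_compact_mem_nhds z
    obtain ⟨δ, hδ, hsub⟩ := Metric.nhds_basis_closedBall.mem_iff.1 hs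
    exact ⟨δ, hδ, hsc.of_isClosed_subset Metric.isClosed_closedBall hsub⟩
  -- claim A: compactness extends a bit
  have claimA : ∀ ρ : ℝ, 0 ≤ ρ → IsCompact (closedBall x₀ ρ) →
      ∃ ε > (0:ℝ), IsCompact (closedBall x₀ (ρ + ε)) := by
    intro ρ hρ hK
    choose δ hδpos hδc using loc
    obtain ⟨t, htK, hcov⟩ := hK.elim_nhds_subcover (fun z => ball z (δ z / 2))
      (fun z _ => ball_mem_nhds z (by linarith [hδpos z]))
    by_cases ht : t.Nonempty
    · set ε := t.inf' ht (fun z => δ z / 2) with hε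
      have hεpos : 0 < ε := by
        apply (Finset.lt_inf'_iff ht).2
        intro z _; linarith [hδpos z]
      refine ⟨ε, hεpos, ?_⟩
      have hsub : closedBall x₀ (ρ + ε) ⊆ ⋃ z ∈ t, closedBall z (δ z) := by
        intro y hy
        simp only [mem_closedBall] at hy
        by_cases hd : dist y x₀ ≤ ρ
        · obtain ⟨w, hwt, hw⟩ := Set.mem_iUnion₂.1 (hcov (mem_closedBall.2 hd))
          exact Set.mem_iUnion₂.2 ⟨w, hwt,
            closedBall_subset_closedBall (by linarith [hδpos w]) (ball_subset_closedBall hw)⟩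
        · push_neg at hd
          obtain ⟨z, hz1, hz2⟩ := exists_point_at hX x₀ y
            (t := ρ) ⟨hρ, by rw [dist_comm]; linarith⟩
          have hzK : z ∈ closedBall x₀ ρ := mem_closedBall'.2 (le_of_eq hz1)
          obtain ⟨w, hwt, hw⟩ := Set.mem_iUnion₂.1 (hcov hzK)
          refine Set.mem_iUnion₂.2 ⟨w, hwt, mem_closedBall'.2 ?_⟩
          have hεw : ε ≤ δ w / 2 := Finset.inf'_le _ hwt
          have h1 : dist w z < δ w / 2 := mem_ball'.1 hw
          have h2 : dist z y ≤ ε := by rw [dist_comm x₀ y] at hz2; linarith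
          calc dist w y ≤ dist w z + dist z y := dist_triangle _ _ _
            _ ≤ δ w := by linarith
      have hcomp : IsCompact (⋃ z ∈ t, closedBall z (δ z)) :=
        t.finite_toSet.isCompact_biUnion (fun z _ => hδc z)
      exact hcomp.of_isClosed_subset Metric.isClosed_closedBall hsub
    · -- t empty: then closedBall x₀ ρ is empty, impossible since x₀ ∈ it
      exfalso
      have : x₀ ∈ closedBall x₀ ρ := mem_closedBall_self hρ
      obtain ⟨w, hwt, _⟩ := Set.mem_iUnion₂.1 (hcov this)
      exact ht ⟨w, hwt⟩
  -- claim B: closedness at limits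
  have claimB : ∀ ρ : ℝ, 0 ≤ ρ →
      (∀ ρ' : ℝ, 0 ≤ ρ' → ρ' < ρ → IsCompact (closedBall x₀ ρ')) →
      IsCompact (closedBall x₀ ρ) := by
    intro ρ hρ hprev
    apply TotallyBounded.isCompact_of_isClosed _ Metric.isClosed_closedBall
    rw [Metric.totallyBounded_iff]
    intro ε hε
    by_cases hsmall : ρ ≤ ε / 2
    · refine ⟨{x₀}, Set.finite_singleton _, ?_⟩
      intro y hy
      simp only [Set.mem_singleton_iff, Set.iUnion_iUnion_eq_left]
      exact mem_ball'.2 (lt_of_le_of_lt (mem_closedBall'.1 hy) (by linarith))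
    · push_neg at hsmall
      obtain ⟨ρ', hρ'⟩ : ∃ ρ' : ℝ, ρ' = ρ - ε / 2 := ⟨_, rfl⟩
      have hρ'0 : 0 ≤ ρ' := by rw [hρ']; linarith
      have hcK : IsCompact (closedBall x₀ ρ') := hprev ρ' hρ'0 (by rw [hρ']; linarith)
      obtain ⟨s, hsfin, hscov⟩ := Metric.totallyBounded_iff.1 hcK.totallyBounded (ε/2) (by linarith)
      refine ⟨s, hsfin, ?_⟩
      intro y hy
      have hd : dist x₀ y ≤ ρ := by rw [dist_comm]; exact mem_closedBall.1 hy
      by_cases hdl : dist x₀ y ≤ ρ'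
      · obtain ⟨w, hws, hw⟩ := Set.mem_iUnion₂.1 (hscov (mem_closedBall'.2 hdl))
        exact Set.mem_iUnion₂.2 ⟨w, hws, ball_subset_ball (by linarith) hw⟩
      · push_neg at hdl
        obtain ⟨z, hz1, hz2⟩ := exists_point_at hX x₀ y (t := ρ') ⟨hρ'0, le_of_lt hdl⟩
        have hzK : z ∈ closedBall x₀ ρ' := mem_closedBall'.2 (le_of_eq hz1)
        obtain ⟨w, hws, hw⟩ := Set.mem_iUnion₂.1 (hscov hzK)
        refine Set.mem_iUnion₂.2 ⟨w, hws, mem_ball'.2 ?_⟩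
        have h1 : dist w z < ε / 2 := mem_ball'.1 hw
        have h2 : dist z y ≤ ε / 2 := by rw [hz2, hρ']; linarith
        calc dist w y ≤ dist w z + dist z y := dist_triangle _ _ _
          _ < ε := by linarith
  -- conclude
  by_contra hnc
  have hr0 : 0 ≤ r := by
    by_contra h
    push_neg at h
    exact hnc (by rw [Metric.closedBall_eq_empty.2 h]; exact isCompact_empty)
  set B := {ρ : ℝ | 0 ≤ ρ ∧ ¬ IsCompact (closedBall x₀ ρ)} with hB
  have hBne : B.Nonempty := ⟨r, hr0, hnc⟩
  have hBbd : BddBelow B := ⟨0, fun ρ hρ => hρ.1⟩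
  set m := sInf B with hm
  have hm0 : 0 ≤ m := le_csInf hBne (fun ρ hρ => hρ.1)
  have hmc : IsCompact (closedBall x₀ m) := by
    apply claimB m hm0
    intro ρ' hρ'0 hρ'm
    by_contra h
    exact absurd (csInf_le hBbd ⟨hρ'0, h⟩) (not_le.2 hρ'm)
  obtain ⟨ε, hεpos, hεc⟩ := claimA m hm0 hmc
  obtain ⟨b, hbB, hbl⟩ := exists_lt_of_csInf_lt hBne (show sInf B < m + ε by linarith)
  exact hbB.2 (hεc.of_isClosed_subset Metric.isClosed_closedBall
    (closedBall_subset_closedBall (le_of_lt hbl)))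

/-- A closed convex subset of a complete, locally compact,
uniquely geodesic space is noncompact iff it contains a geodesic ray. -/
theorem stmt8 {X : Type*} [MetricSpace X] [CompleteSpace X] [LocallyCompactSpace X]
    (hX : UniquelyGeodesic X)
    (A : Set X) (hclosed : IsClosed A) (hconv : GeodConvex A) :
    ¬ IsCompact A ↔ ∃ γ : ℝ → X, GeodesicRayIn A γ := by
  constructor
  · intro hnc
    -- A is nonempty
    have hA : A.Nonempty := by
      rcases A.eq_empty_or_nonempty with h | h
      · exact absurd (h ▸ isCompact_empty) hnc
      · exact h
    obtain ⟨x₀, hx₀⟩ := hA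
    -- A is unbounded
    have hub : ∀ n : ℕ, ∃ z ∈ A, (n:ℝ) < dist x₀ z := by
      intro n
      by_contra h
      push_neg at h
      exact hnc ((ball_compact hX x₀ n).of_isClosed_subset hclosed
        (fun z hz => mem_closedBall'.2 (h z hz)))
    choose y hyA hyd using hub
    choose Γ h0 hd hg using fun n => (hX x₀ (y n)).1
    set U : Ultrafilter ℕ := Filter.hyperfilter ℕ with hU
    set f : ℝ → ℕ → X := fun t n => Γ n (min (max t 0) (dist x₀ (y n))) with hf
    -- basic facts about f
    have hmem : ∀ (t : ℝ) (n : ℕ), min (max t 0) (dist x₀ (y n)) ∈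
        Set.Icc (0:ℝ) (dist x₀ (y n)) :=
      fun t n => ⟨le_min (le_max_right _ _) dist_nonneg, min_le_right _ _⟩
    have hdx : ∀ (t : ℝ) (n : ℕ), dist x₀ (f t n) = min (max t 0) (dist x₀ (y n)) := by
      intro t n
      have := hg n 0 ⟨le_refl 0, dist_nonneg⟩ _ (hmem t n)
      rw [h0 n] at this
      rw [hf]
      simp only
      rw [this, zero_sub, abs_neg, abs_of_nonneg (hmem t n).1]
    have hdy : ∀ (t : ℝ) (n : ℕ), dist (f t n) (y n)
        = dist x₀ (y n) - min (max t 0) (dist x₀ (y n)) := by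
      intro t n
      have := hg n _ (hmem t n) (dist x₀ (y n)) ⟨dist_nonneg, le_refl _⟩
      rw [hd n] at this
      rw [hf]
      simp only
      rw [this, abs_of_nonpos (by linarith [(hmem t n).2]), neg_sub]
    have hfA : ∀ (t : ℝ) (n : ℕ), f t n ∈ A := by
      intro t n
      apply hconv x₀ hx₀ (y n) (hyA n)
      show dist x₀ (f t n) + dist (f t n) (y n) = dist x₀ (y n)
      rw [hdx, hdy]; ring
    -- ultrafilter limits
    have key : ∀ t : ℝ, ∃ p : X, p ∈ A ∧
        Filter.Tendsto (fun n => f t n) ↑U (𝓝 p) := by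
      intro t
      have hK : IsCompact (Metric.closedBall x₀ (max t 0) ∩ A) :=
        (ball_compact hX x₀ _).inter_right hclosed
      have hsub : ∀ n, f t n ∈ Metric.closedBall x₀ (max t 0) ∩ A := by
        intro n
        exact ⟨mem_closedBall'.2 (by rw [hdx]; exact min_le_left _ _), hfA t n⟩
      have hle : ↑(U.map (f t)) ≤ 𝓟 (Metric.closedBall x₀ (max t 0) ∩ A) := by
        rw [Filter.le_principal_iff, Ultrafilter.coe_map, Filter.mem_map]
        exact Filter.univ_mem' hsub
      obtain ⟨p, hp, hple⟩ := hK.ultrafilter_le_nhds (U.map (f t)) hle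
      refine ⟨p, hp.2, ?_⟩
      rwa [Ultrafilter.coe_map] at hple
    choose γ hγA hγt using key
    refine ⟨γ, fun t _ => hγA t, ?_⟩
    intro s t hs ht
    have h1 : Filter.Tendsto (fun n => dist (f s n) (f t n)) ↑U
        (𝓝 (dist (γ s) (γ t))) := (hγt s).dist (hγt t)
    have h2 : ∀ᶠ n in (↑U : Filter ℕ), dist (f s n) (f t n) = |s - t| := by
      have hev : ∀ᶠ n : ℕ in (Filter.cofinite : Filter ℕ), (max s t : ℝ) ≤ (n : ℝ) := by
        rw [Nat.cofinite_eq_atTop]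
        exact tendsto_natCast_atTop_atTop.eventually_ge_atTop (max s t)
      refine (hev.filter_mono (Filter.hyperfilter_le_cofinite)).mono ?_
      intro n hn
      have hdn : (n : ℝ) < dist x₀ (y n) := hyd n
      have hsn : s ≤ dist x₀ (y n) := le_of_lt (lt_of_le_of_lt (le_trans (le_max_left s t) hn) hdn)
      have htn : t ≤ dist x₀ (y n) := le_of_lt (lt_of_le_of_lt (le_trans (le_max_right s t) hn) hdn)
      have hfs : f s n = Γ n s := by
        rw [hf]; simp only; rw [max_eq_left hs, min_eq_left hsn]
      have hft : f t n = Γ n t := by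
        rw [hf]; simp only; rw [max_eq_left ht, min_eq_left htn]
      rw [hfs, hft]
      exact hg n s ⟨hs, hsn⟩ t ⟨ht, htn⟩
    exact tendsto_nhds_unique h1 (Filter.Tendsto.congr' (h2.mono fun n hn => hn.symm) tendsto_const_nhds)
  · rintro ⟨γ, hγA, hγd⟩ hc
    obtain ⟨C, hC⟩ := hc.isBounded.subset_closedBall (γ 0)
    have h1 : γ (|C| + 1) ∈ A := hγA _ (by positivity)
    have h2 : dist (γ (|C| + 1)) (γ 0) ≤ C := mem_closedBall.1 (hC h1)
    have h3 : dist (γ (|C| + 1)) (γ 0) = |C| + 1 := by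
      rw [hγd _ _ (by positivity) le_rfl, sub_zero, abs_of_nonneg (by positivity)]
    have := le_abs_self C
    linarith
end

section
/- In the discrete Lion-Man game with jump bound D > 0 played in a convex subset A of a uniquely geodesic space, if at every step the lion's distance D_i = d(L_i, M_i) to the man exceeds D, then the sequence (D_i) is nonincreasing; consequently the lion wins (i.e., d(L_{i+1}, M_i) → 0) if and only if either D_{i_0} ≤ D for some i_0, or D_i > D for all i and lim D_i = D. -/
open Set Filter Topology

/-- In the Lion-Man game, if the lion's distance to the man always
exceeds `D` then the sequence of distances is nonincreasing; consequently the
lion wins iff either `D_{i₀} ≤ D` for some `i₀`, or `D_i > D` for all `i` and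
`D_i → D`. -/
theorem stmt9 {X : Type*} [MetricSpace X] (hX : UniquelyGeodesic X)
    (A : Set X) (hA : GeodConvex A) (D : ℝ) (hD : 0 < D)
    (L M : ℕ → X) (hgame : LionManRules A D L M) :
    ((∀ i, D < dist (L i) (M i)) → Antitone fun i => dist (L i) (M i)) ∧
    (LionWins L M ↔
      (∃ i₀, dist (L i₀) (M i₀) ≤ D) ∨
      ((∀ i, D < dist (L i) (M i)) ∧
        Filter.Tendsto (fun i => dist (L i) (M i)) Filter.atTop (nhds D))) := by
  obtain ⟨-, hM, hseg, hstep, hman⟩ := hgame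
  set d : ℕ → ℝ := fun i => dist (L i) (M i) with hd
  -- key: d(L_{i+1}, M_i) = d i - min D (d i)
  have key : ∀ i, dist (L (i+1)) (M i) = d i - min D (d i) := by
    intro i
    have h := hseg i
    simp only [GeodSegment, Set.mem_setOf_eq] at h
    have h2 := hstep i
    linarith
  have tri : ∀ i, d (i+1) ≤ dist (L (i+1)) (M i) + D := by
    intro i
    calc d (i+1) ≤ dist (L (i+1)) (M i) + dist (M i) (M (i+1)) := dist_triangle _ _ _
      _ ≤ dist (L (i+1)) (M i) + D := by linarith [hman i]
  constructor
  · intro hall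
    apply antitone_nat_of_succ_le
    intro i
    have h1 := key i
    have h2 := tri i
    have : min D (d i) = D := min_eq_left (le_of_lt (hall i))
    rw [this] at h1
    linarith
  · constructor
    · intro hwin
      by_cases hex : ∃ i₀, d i₀ ≤ D
      · exact Or.inl hex
      · push_neg at hex
        refine Or.inr ⟨hex, ?_⟩
        have heq : ∀ i, dist (L (i+1)) (M i) = d i - D := by
          intro i
          rw [key i, min_eq_left (le_of_lt (hex i))]
        have h0 : Tendsto (fun i => d i - D) atTop (nhds 0) := by
          refine hwin.congr ?_
          intro i; exact heq i
        have := h0.add_const D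
        simpa using this
    · rintro (⟨i₀, hi₀⟩ | ⟨hall, hlim⟩)
      · -- d stays ≤ D from i₀ onward, so dist (L (i+1)) (M i) = 0 eventually
        have hle : ∀ k, d (i₀ + k) ≤ D := by
          intro k
          induction k with
          | zero => simpa using hi₀
          | succ n ih =>
            have h1 := key (i₀ + n)
            have h2 := tri (i₀ + n)
            have : min D (d (i₀ + n)) = d (i₀ + n) := min_eq_right ih
            rw [this] at h1
            have : d (i₀ + n + 1) ≤ D := by linarith
            exact this
        have hzero : ∀ i, i₀ ≤ i → dist (L (i+1)) (M i) = 0 := by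
          intro i hi
          obtain ⟨k, rfl⟩ := Nat.exists_eq_add_of_le hi
          rw [key, min_eq_right (hle k)]
          ring
        have : (fun i => dist (L (i+1)) (M i)) =ᶠ[atTop] (fun _ => (0:ℝ)) :=
          Filter.eventually_atTop.2 ⟨i₀, hzero⟩
        exact Tendsto.congr' this.symm tendsto_const_nhds
      · have heq : ∀ i, dist (L (i+1)) (M i) = d i - D := by
          intro i
          rw [key i, min_eq_left (le_of_lt (hall i))]
        have h0 : Tendsto (fun i => d i - D) atTop (nhds (D - D)) := hlim.sub_const D
        rw [sub_self] at h0
        exact h0.congr fun i => (heq i).symm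
end

section
/- In the Besicovitch-style escape sequence in the Euclidean plane with parameter D>0, define t_{i+1}>0 by the recurrence (D + t_{i+2})² = D² + t_{i+1}² with t_1 ∈ (0, D). Then t_i ∈ (0, D) for all i ≥ 1, t_{i+2} < t_{i+1}/2 for all i, and ∑_{i≥1} t_i ≤ 2D. -/
open Set Filter Topology

/-- the Besicovitch recurrence `(D + t_{i+2})² = D² + t_{i+1}²`
with `t₁ ∈ (0,D)` gives `t_i ∈ (0,D)` for all `i ≥ 1`, `t_{i+2} < t_{i+1}/2`,
and `∑_{i ≥ 1} t_i ≤ 2D`. -/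
theorem stmt10 (D : ℝ) (hD : 0 < D) (t : ℕ → ℝ)
    (h1 : t 1 ∈ Set.Ioo 0 D)
    (hpos : ∀ i : ℕ, 0 < t (i + 2))
    (hrec : ∀ i : ℕ, (D + t (i + 2))^2 = D^2 + (t (i + 1))^2) :
    (∀ i : ℕ, 1 ≤ i → t i ∈ Set.Ioo 0 D) ∧
    (∀ i : ℕ, t (i + 2) < t (i + 1) / 2) ∧
    (∑' i : ℕ, t (i + 1)) ≤ 2 * D := by
  have key : ∀ i : ℕ, 0 < t (i+1) ∧ t (i+1) < D := by
    intro i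
    induction i with
    | zero => exact ⟨h1.1, h1.2⟩
    | succ n ih =>
      refine ⟨hpos n, ?_⟩
      have h := hrec n
      nlinarith [hpos n, ih.1, ih.2]
  have half : ∀ i : ℕ, t (i+2) < t (i+1) / 2 := by
    intro i
    have h := hrec i
    have hk := key i
    nlinarith [hpos i, hk.1, hk.2]
  refine ⟨?_, half, ?_⟩
  · intro i hi
    match i, hi with
    | (j+1), _ => exact ⟨(key j).1, (key j).2⟩
  · have hbound : ∀ i : ℕ, t (i+1) ≤ t 1 * (1/2:ℝ)^i := by
      intro i
      induction i with
      | zero => simp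
      | succ n ih =>
        calc t (n+1+1) ≤ t (n+1)/2 := (half n).le
          _ ≤ (t 1 * (1/2:ℝ)^n)/2 := by linarith
          _ = t 1 * (1/2:ℝ)^(n+1) := by ring
    have hgeo : Summable (fun i : ℕ => t 1 * (1/2:ℝ)^i) :=
      (summable_geometric_of_lt_one (by norm_num) (by norm_num)).mul_left _
    have hsum : Summable (fun i : ℕ => t (i+1)) :=
      Summable.of_nonneg_of_le (fun i => (key i).1.le) hbound hgeo
    calc (∑' i : ℕ, t (i+1)) ≤ ∑' i : ℕ, t 1 * (1/2:ℝ)^i :=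
          Summable.tsum_le_tsum hbound hsum hgeo
      _ = t 1 * (1 - 1/2)⁻¹ := by
          rw [tsum_mul_left, tsum_geometric_of_lt_one (by norm_num) (by norm_num)]
      _ ≤ 2 * D := by nlinarith [h1.2]
end

section
/- Let A be a nonempty, compact, strongly convex subset of a complete, locally compact, uniquely geodesic metric space, and suppose the Lion-Man game with jump bound D > 0 is played in A. Then the lion wins: lim_{i→∞} d(L_{i+1}, M_i) = 0. -/
open Set Filter Topology

section Helpers

variable {X : Type*} [MetricSpace X]

lemma geodesicOn_concat {σ1 σ2 : ℝ → X} {a b : ℝ}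
    (ha : 0 ≤ a) (hb : 0 ≤ b)
    (h1 : IsGeodesicOn σ1 a) (h2 : IsGeodesicOn σ2 b)
    (hj : σ1 a = σ2 0) (hd : dist (σ1 0) (σ2 b) = a + b) :
    IsGeodesicOn (fun t => if t ≤ a then σ1 t else σ2 (t - a)) (a + b) := by
  have key : ∀ s ∈ Set.Icc (0:ℝ) (a+b), ∀ t ∈ Set.Icc (0:ℝ) (a+b), s ≤ t →
      dist (if s ≤ a then σ1 s else σ2 (s - a)) (if t ≤ a then σ1 t else σ2 (t - a))
        = t - s := by
    rintro s ⟨hs0, hs1⟩ t ⟨ht0, ht1⟩ hst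
    rcases le_or_gt t a with hta | hta
    · rw [if_pos (hst.trans hta), if_pos hta,
        h1 s ⟨hs0, hst.trans hta⟩ t ⟨ht0, hta⟩, abs_of_nonpos (by linarith)]
      ring
    · rcases le_or_gt s a with hsa | hsa
      · rw [if_pos hsa, if_neg (not_le.mpr hta)]
        have e1 : dist (σ1 s) (σ1 a) = a - s := by
          rw [h1 s ⟨hs0, hsa⟩ a ⟨ha, le_refl a⟩, abs_of_nonpos (by linarith)]; ring
        have e2 : dist (σ2 0) (σ2 (t - a)) = t - a := by
          rw [h2 0 ⟨le_refl 0, hb⟩ (t - a) ⟨by linarith, by linarith⟩,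
            abs_of_nonpos (by linarith)]
          ring
        have e3 : dist (σ1 0) (σ1 s) = s := by
          rw [h1 0 ⟨le_refl 0, ha⟩ s ⟨hs0, hsa⟩, abs_of_nonpos (by linarith)]; ring
        have e4 : dist (σ2 (t - a)) (σ2 b) = b - (t - a) := by
          rw [h2 (t - a) ⟨by linarith, by linarith⟩ b ⟨hb, le_refl b⟩,
            abs_of_nonpos (by linarith)]
          ring
        have tup : dist (σ1 s) (σ2 (t - a)) ≤ t - s := by
          calc dist (σ1 s) (σ2 (t - a)) ≤ dist (σ1 s) (σ1 a) + dist (σ1 a) (σ2 (t - a)) :=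
                dist_triangle _ _ _
            _ = (a - s) + (t - a) := by rw [e1, hj, e2]
            _ = t - s := by ring
        have tlo : t - s ≤ dist (σ1 s) (σ2 (t - a)) := by
          have h4 := dist_triangle4 (σ1 0) (σ1 s) (σ2 (t - a)) (σ2 b)
          rw [hd, e3, e4] at h4
          linarith
        linarith
      · rw [if_neg (not_le.mpr hsa), if_neg (not_le.mpr hta),
          h2 (s - a) ⟨by linarith, by linarith⟩ (t - a) ⟨by linarith, by linarith⟩,
          abs_of_nonpos (by linarith)]
        ring
  intro s hs t ht
  show dist (if s ≤ a then σ1 s else σ2 (s - a)) (if t ≤ a then σ1 t else σ2 (t - a)) = |s - t|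
  rcases le_total s t with h | h
  · rw [key s hs t ht h, abs_of_nonpos (by linarith)]; ring
  · rw [dist_comm, key t ht s hs h, abs_of_nonneg (by linarith)]

lemma seg_of_geodesic {σ : ℝ → X} {L : ℝ}
    (h : IsGeodesicOn σ L) (h0 : 0 ≤ L) {t : ℝ} (ht : t ∈ Set.Icc (0:ℝ) L) :
    σ t ∈ GeodSegment (σ 0) (σ L) := by
  have e1 := h 0 ⟨le_refl 0, h0⟩ t ht
  have e2 := h t ht L ⟨h0, le_refl L⟩
  have e3 := h 0 ⟨le_refl 0, h0⟩ L ⟨h0, le_refl L⟩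
  simp only [GeodSegment, Set.mem_setOf_eq]
  rw [e1, e2, e3, abs_of_nonpos (by linarith [ht.1]), abs_of_nonpos (by linarith [ht.2]),
    abs_of_nonpos (by linarith)]
  ring

lemma between_key (hX : UniquelyGeodesic X) {A : Set X} (hsc : StronglyConvexSet A)
    {x y z w : X} (hx : x ∈ A) (hy : y ∈ A) (hz : z ∈ A) (hw : w ∈ A)
    (hxz : dist x y + dist y z = dist x z)
    (hyw : dist y z + dist z w = dist y w)
    (hyz : y ≠ z) :
    dist x w = dist x y + dist y z + dist z w := by
  by_cases hzw : z = w
  · subst hzw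
    rw [dist_self]
    linarith
  obtain ⟨σ1, hσ1x, hσ1y, hσ1⟩ := (hX x y).1
  obtain ⟨σ2, hσ2y, hσ2z, hσ2⟩ := (hX y z).1
  obtain ⟨σ3, hσ3z, hσ3w, hσ3⟩ := (hX z w).1
  set a := dist x y with hadef
  set b := dist y z with hbdef
  set c := dist z w with hcdef
  have ha : 0 ≤ a := dist_nonneg
  have hbpos : 0 < b := dist_pos.mpr hyz
  have hcpos : 0 < c := dist_pos.mpr hzw
  have hj1 : σ1 a = σ2 0 := by rw [hσ1y, hσ2y]
  have hd1 : dist (σ1 0) (σ2 b) = a + b := by rw [hσ1x, hσ2z]; linarith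
  have hc1 := geodesicOn_concat ha hbpos.le hσ1 hσ2 hj1 hd1
  have hj2 : σ2 b = σ3 0 := by rw [hσ2z, hσ3z]
  have hd2 : dist (σ2 0) (σ3 c) = b + c := by rw [hσ2y, hσ3w]; linarith
  have hc2 := geodesicOn_concat hbpos.le hcpos.le hσ2 hσ3 hj2 hd2
  set c1 : ℝ → X := fun t => if t ≤ a then σ1 t else σ2 (t - a) with hc1def
  set c2 : ℝ → X := fun u => if u ≤ b then σ2 u else σ3 (u - b) with hc2def
  set γ : ℝ → X := fun t => if t ≤ a + b then c1 t else σ3 (t - (a + b)) with hγdef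
  set l := a + b + c with hldef
  have hl0 : (0:ℝ) ≤ l := by linarith
  have hγc1 : ∀ s ∈ Set.Icc (0:ℝ) (a+b), γ s = c1 s := by
    intro s hs
    simp only [hγdef]
    rw [if_pos hs.2]
  have F1 : ∀ s ∈ Set.Icc (0:ℝ) (a+b), ∀ t ∈ Set.Icc (0:ℝ) (a+b),
      dist (γ s) (γ t) = |s - t| := by
    intro s hs t ht
    rw [hγc1 s hs, hγc1 t ht]
    exact hc1 s hs t ht
  have hγc2 : ∀ s ∈ Set.Icc a l, γ s = c2 (s - a) := by
    rintro s ⟨hsa, hsl⟩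
    by_cases h : s ≤ a + b
    · rw [hγc1 s ⟨by linarith, h⟩]
      by_cases h' : s ≤ a
      · have hsa' : s = a := le_antisymm h' hsa
        rw [hsa']
        simp only [hc1def, hc2def]
        rw [if_pos (le_refl a), sub_self, if_pos hbpos.le, hj1]
      · simp only [hc1def, hc2def]
        rw [if_neg h', if_pos (by linarith : s - a ≤ b)]
    · simp only [hγdef, hc2def]
      rw [if_neg h, if_neg (by push_neg at h ⊢; linarith : ¬ (s - a ≤ b)),
        show s - (a + b) = s - a - b by ring]
  have F2 : ∀ s ∈ Set.Icc a l, ∀ t ∈ Set.Icc a l, dist (γ s) (γ t) = |s - t| := by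
    intro s hs t ht
    rw [hγc2 s hs, hγc2 t ht,
      hc2 (s - a) ⟨by linarith [hs.1], by linarith [hs.2]⟩
        (t - a) ⟨by linarith [ht.1], by linarith [ht.2]⟩,
      show s - a - (t - a) = s - t by ring]
  have hmem : ∀ t ∈ Set.Icc (0:ℝ) l, γ t ∈ A := by
    rintro t ⟨ht0, htl⟩
    by_cases h : t ≤ a + b
    · rw [hγc1 t ⟨ht0, h⟩]
      by_cases h' : t ≤ a
      · simp only [hc1def]
        rw [if_pos h']
        have hm := seg_of_geodesic hσ1 ha ⟨ht0, h'⟩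
        rw [hσ1x, hσ1y] at hm
        exact hsc.1 x hx y hy hm
      · simp only [hc1def]
        rw [if_neg h']
        have hm := seg_of_geodesic hσ2 hbpos.le
          (⟨by push_neg at h'; linarith, by linarith⟩ : t - a ∈ Set.Icc (0:ℝ) b)
        rw [hσ2y, hσ2z] at hm
        exact hsc.1 y hy z hz hm
    · simp only [hγdef]
      rw [if_neg h]
      have hm := seg_of_geodesic hσ3 hcpos.le
        (⟨by push_neg at h; linarith, by linarith⟩ : t - (a + b) ∈ Set.Icc (0:ℝ) c)
      rw [hσ3z, hσ3w] at hm
      exact hsc.1 z hz w hw hm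
  have hloc : IsLocalGeodesicOn γ l := by
    rintro t ⟨ht0, htl⟩
    by_cases h : t < a + b
    · refine ⟨t - 1, (t + (a + b)) / 2, by linarith, by linarith, ?_⟩
      intro s hs s' hs'
      exact F1 s ⟨hs.2.1, by linarith [hs.1.2]⟩ s' ⟨hs'.2.1, by linarith [hs'.1.2]⟩
    · push_neg at h
      refine ⟨(t + a) / 2, t + 1, by linarith, by linarith, ?_⟩
      intro s hs s' hs'
      exact F2 s ⟨by linarith [hs.1.1], hs.2.2⟩ s' ⟨by linarith [hs'.1.1], hs'.2.2⟩
  have himg := hsc.2 γ l hl0 ⟨hloc, hmem⟩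
  have hγ0 : γ 0 = x := by
    simp only [hγdef, hc1def]
    rw [if_pos (by linarith : (0:ℝ) ≤ a + b), if_pos ha]
    exact hσ1x
  have hγl : γ l = w := by
    simp only [hγdef]
    rw [if_neg (by simp only [hldef]; push_neg; linarith : ¬ (l ≤ a + b)),
      show l - (a + b) = c by simp only [hldef]; ring]
    exact hσ3w
  have hyim : y ∈ GeodSegment x w := by
    rw [← hγ0, ← hγl, ← himg]
    refine ⟨a, ⟨ha, by linarith⟩, ?_⟩
    rw [hγc1 a ⟨ha, by linarith⟩]
    simp only [hc1def]
    rw [if_pos (le_refl a)]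
    exact hσ1y
  have hfin : dist x y + dist y w = dist x w := hyim
  linarith

end Helpers

set_option maxHeartbeats 1000000 in
/-- In a nonempty, compact, strongly convex subset of a complete,
locally compact, uniquely geodesic space, the lion always wins the Lion-Man
game with jump bound `D > 0`. -/
theorem stmt12 {X : Type*} [MetricSpace X] [CompleteSpace X] [LocallyCompactSpace X]
    (hX : UniquelyGeodesic X)
    (A : Set X) (hne : A.Nonempty) (hcomp : IsCompact A) (hsc : StronglyConvexSet A)
    (D : ℝ) (hD : 0 < D)
    (L M : ℕ → X) (hgame : LionManRules A D L M) :
    LionWins L M := by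
  obtain ⟨hL0, hMA, hseg, hstep, hman⟩ := hgame
  have hLA : ∀ i, L i ∈ A := by
    intro i
    induction i with
    | zero => exact hL0
    | succ n ih => exact hsc.1 _ ih _ (hMA n) (hseg n)
  set f : ℕ → ℝ := fun i => dist (L (i+1)) (M i) with hfdef
  have hfeq : ∀ i, min D (dist (L i) (M i)) + f i = dist (L i) (M i) := by
    intro i
    rw [hfdef, ← hstep i]
    exact hseg i
  have hf0 : ∀ i, 0 ≤ f i := fun i => dist_nonneg
  have hanti : Antitone f := by
    apply antitone_nat_of_succ_le
    intro i
    have h1 := hfeq (i+1)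
    have h3 : dist (L (i+1+1)) (M (i+1)) ≤ dist (L (i+1)) (M (i+1)) := by
      have := hfeq (i+1)
      have hmin : 0 ≤ min D (dist (L (i+1)) (M (i+1))) :=
        le_min hD.le dist_nonneg
      linarith
    have h4 : dist (L (i+1)) (M (i+1)) ≤ f i + D := by
      have ht := dist_triangle (L (i+1)) (M i) (M (i+1))
      have hfi : f i = dist (L (i+1)) (M i) := rfl
      have := hman i
      linarith
    rcases le_total D (dist (L (i+1)) (M (i+1))) with h | h
    · rw [min_eq_left h] at h1; linarith
    · rw [min_eq_right h] at h1; have := hf0 i; linarith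
  have hbdd : BddBelow (Set.range f) := ⟨0, by rintro _ ⟨i, rfl⟩; exact hf0 i⟩
  set ε := ⨅ i, f i with hεdef
  have htend : Tendsto f atTop (𝓝 ε) := tendsto_atTop_ciInf hanti hbdd
  by_contra hW
  have hεne : ε ≠ 0 := by
    intro h
    exact hW (by rw [h] at htend; exact htend)
  have hε0 : 0 ≤ ε := le_ciInf hf0
  have hεpos : 0 < ε := lt_of_le_of_ne hε0 (Ne.symm hεne)
  have hεle : ∀ i, ε ≤ f i := fun i => ciInf_le hbdd i
  have hDjump : ∀ i, dist (L i) (M i) = f i + D := by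
    intro i
    have h1 := hfeq i
    rcases le_total D (dist (L i) (M i)) with h | h
    · rw [min_eq_left h] at h1; linarith
    · rw [min_eq_right h] at h1
      have := hεle i
      linarith
  have hLL : ∀ i, dist (L i) (L (i+1)) = D := by
    intro i
    rw [hstep i, min_eq_left]
    rw [hDjump i]
    have := hεle i
    linarith
  -- extract convergent subsequence in the product space
  have hcomp2 : IsCompact ((Set.univ : Set ℕ).pi fun _ => A ×ˢ A) :=
    isCompact_univ_pi fun _ => hcomp.prod hcomp
  set u : ℕ → ℕ → X × X := fun i n => (L (i + n), M (i + n)) with hudef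
  have humem : ∀ i, u i ∈ (Set.univ : Set ℕ).pi fun _ => A ×ˢ A :=
    fun i n _ => ⟨hLA _, hMA _⟩
  obtain ⟨P, hPmem, φ, hφ, hconv⟩ := hcomp2.isSeqCompact humem
  have hPn : ∀ n, Tendsto (fun i => u (φ i) n) atTop (𝓝 (P n)) :=
    fun n => tendsto_pi_nhds.mp hconv n
  set l : ℕ → X := fun n => (P n).1 with hldef
  set m : ℕ → X := fun n => (P n).2 with hmdef
  have hLt : ∀ n, Tendsto (fun i => L (φ i + n)) atTop (𝓝 (l n)) :=
    fun n => (continuous_fst.tendsto (P n)).comp (hPn n)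
  have hMt : ∀ n, Tendsto (fun i => M (φ i + n)) atTop (𝓝 (m n)) :=
    fun n => (continuous_snd.tendsto (P n)).comp (hPn n)
  have hidx : ∀ n : ℕ, Tendsto (fun i => φ i + n) atTop atTop :=
    fun n => (tendsto_add_atTop_nat n).comp hφ.tendsto_atTop
  have hlA : ∀ n, l n ∈ A := fun n => (hPmem n (Set.mem_univ n)).1
  have hmA : ∀ n, m n ∈ A := fun n => (hPmem n (Set.mem_univ n)).2
  have hflim : ∀ n, dist (l (n+1)) (m n) = ε := by
    intro n
    have h1 : Tendsto (fun i => dist (L (φ i + n + 1)) (M (φ i + n))) atTop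
        (𝓝 (dist (l (n+1)) (m n))) := (hLt (n+1)).dist (hMt n)
    have h2 : Tendsto (fun i => dist (L (φ i + n + 1)) (M (φ i + n))) atTop (𝓝 ε) :=
      htend.comp (hidx n)
    exact tendsto_nhds_unique h1 h2
  have hdlm : ∀ n, dist (l n) (m n) = ε + D := by
    intro n
    have h1 : Tendsto (fun i => dist (L (φ i + n)) (M (φ i + n))) atTop
        (𝓝 (dist (l n) (m n))) := (hLt n).dist (hMt n)
    have h2 : Tendsto (fun i => dist (L (φ i + n)) (M (φ i + n))) atTop (𝓝 (ε + D)) := by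
      have h3 : (fun i => dist (L (φ i + n)) (M (φ i + n)))
          = fun i => f (φ i + n) + D := funext fun i => hDjump _
      rw [h3]
      exact (htend.comp (hidx n)).add_const D
    exact tendsto_nhds_unique h1 h2
  have hdll : ∀ n, dist (l n) (l (n+1)) = D := by
    intro n
    have h1 : Tendsto (fun i => dist (L (φ i + n)) (L (φ i + n + 1))) atTop
        (𝓝 (dist (l n) (l (n+1)))) := (hLt n).dist (hLt (n+1))
    have h2 : (fun i => dist (L (φ i + n)) (L (φ i + n + 1))) = fun _ => D :=
      funext fun i => hLL _
    rw [h2] at h1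
    exact tendsto_nhds_unique h1 tendsto_const_nhds
  have hmm : ∀ n, dist (m n) (m (n+1)) ≤ D := by
    intro n
    exact le_of_tendsto ((hMt n).dist (hMt (n+1)))
      (Filter.Eventually.of_forall fun i => hman _)
  have hmain : ∀ n : ℕ, dist (l 0) (l n) = n * D ∧
      dist (l 0) (l n) + dist (l n) (m n) = dist (l 0) (m n) := by
    intro n
    induction n with
    | zero => simp
    | succ n ih =>
      obtain ⟨ih1, ih2⟩ := ih
      have t1 : dist (l 0) (l (n+1)) ≤ dist (l 0) (l n) + dist (l n) (l (n+1)) :=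
        dist_triangle _ _ _
      have t2 : dist (l 0) (m n) ≤ dist (l 0) (l (n+1)) + dist (l (n+1)) (m n) :=
        dist_triangle _ _ _
      have hc : dist (l n) (l (n+1)) + dist (l (n+1)) (m n) = dist (l n) (m n) := by
        rw [hdll n, hflim n, hdlm n]; ring
      have e1 : dist (l 0) (l (n+1)) = dist (l 0) (l n) + D := by
        have := hdll n
        linarith
      have e2 : dist (l 0) (l (n+1)) + dist (l (n+1)) (m n) = dist (l 0) (m n) := by
        have := hdll n
        linarith
      have hmn1 : dist (l (n+1)) (m n) + dist (m n) (m (n+1)) = dist (l (n+1)) (m (n+1)) := by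
        have t4 := dist_triangle (l (n+1)) (m n) (m (n+1))
        have a1 := hdlm (n+1)
        have a2 := hflim n
        have a3 := hmm n
        linarith
      have hne : l (n+1) ≠ m n := by
        rw [← dist_pos, hflim n]
        exact hεpos
      have hkey := between_key hX hsc (hlA 0) (hlA (n+1)) (hmA n) (hmA (n+1))
        e2 hmn1 hne
      constructor
      · rw [e1, ih1]
        push_cast
        ring
      · linarith
  obtain ⟨C, hC⟩ := Metric.isBounded_iff.mp hcomp.isBounded
  obtain ⟨n, hn⟩ := exists_nat_gt (C / D)
  have h1 : dist (l 0) (l n) ≤ C := hC (hlA 0) (hlA n)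
  have h2 : (n : ℝ) * D > C := by
    rw [gt_iff_lt, ← div_lt_iff₀ hD]
    exact hn
  have := (hmain n).1
  linarith
end

section
/- Let A be a nonempty, closed, strongly convex subset of a complete, locally compact, uniquely geodesic metric space. Suppose the man wins the Lion-Man game with jump bound D > 0 played in A (i.e., d(L_i, M_i) > D for all i and lim d(L_i, M_i) = D* > D), and suppose A is compact. Then for every n ∈ ℕ there exist points l_0, l_n, m_n ∈ A that are limit points of common subsequences of (L_i) and (M_i) such that l_n ∈ [l_0, m_n], d(l_0, l_n) = nD, and d(l_n, m_n) = D*. -/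
open Set Filter Topology

section Aux
variable {X : Type*} [MetricSpace X]

lemma glue_geodesic {γ₁ γ₂ : ℝ → X} {a c : ℝ} (ha : 0 ≤ a) (hc : 0 ≤ c)
    (h1 : IsGeodesicOn γ₁ a) (h2 : IsGeodesicOn γ₂ c)
    (hjoin : γ₁ a = γ₂ 0) (hdist : dist (γ₁ 0) (γ₂ c) = a + c) :
    IsGeodesicOn (fun t => if t ≤ a then γ₁ t else γ₂ (t - a)) (a + c) := by
  set γ : ℝ → X := fun t => if t ≤ a then γ₁ t else γ₂ (t - a) with hγ
  have key : ∀ s ∈ Icc (0:ℝ) (a+c), ∀ t ∈ Icc (0:ℝ) (a+c), s ≤ t →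
      dist (γ s) (γ t) = t - s := by
    intro s hs t ht hst
    by_cases hsa : s ≤ a
    · by_cases hta : t ≤ a
      · have := h1 s ⟨hs.1, hsa⟩ t ⟨ht.1, hta⟩
        simp only [hγ, if_pos hsa, if_pos hta]
        rw [this, abs_of_nonpos (by linarith)]; ring
      · push_neg at hta
        simp only [hγ, if_pos hsa, if_neg (not_le.2 hta)]
        have hta' : t - a ∈ Icc (0:ℝ) c := ⟨by linarith, by linarith [ht.2]⟩
        have d1 : dist (γ₁ s) (γ₁ a) = a - s := by
          rw [h1 s ⟨hs.1, hsa⟩ a ⟨ha, le_rfl⟩, abs_of_nonpos (by linarith)]; ring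
        have d2 : dist (γ₂ 0) (γ₂ (t - a)) = t - a := by
          rw [h2 0 ⟨le_rfl, hc⟩ (t-a) hta', abs_of_nonpos (by linarith)]; ring
        have d3 : dist (γ₂ (t-a)) (γ₂ c) = c - (t - a) := by
          rw [h2 (t-a) hta' c ⟨hc, le_rfl⟩, abs_of_nonpos (by linarith [ht.2])]; ring
        have d4 : dist (γ₁ 0) (γ₁ s) = s := by
          rw [h1 0 ⟨le_rfl, ha⟩ s ⟨hs.1, hsa⟩, abs_of_nonpos (by linarith [hs.1])]; ring
        have hup : dist (γ₁ s) (γ₂ (t - a)) ≤ t - s := by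
          calc dist (γ₁ s) (γ₂ (t-a)) ≤ dist (γ₁ s) (γ₁ a) + dist (γ₁ a) (γ₂ (t-a)) :=
                dist_triangle _ _ _
            _ = (a - s) + dist (γ₂ 0) (γ₂ (t-a)) := by rw [d1, hjoin]
            _ = t - s := by rw [d2]; ring
        have hlow := dist_triangle4 (γ₁ 0) (γ₁ s) (γ₂ (t-a)) (γ₂ c)
        rw [hdist, d4, d3] at hlow
        linarith
    · push_neg at hsa
      have hta : ¬ t ≤ a := by push_neg; linarith
      simp only [hγ, if_neg (not_le.2 hsa), if_neg hta]
      push_neg at hta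
      rw [h2 (s-a) ⟨by linarith, by linarith [hs.2]⟩ (t-a) ⟨by linarith, by linarith [ht.2]⟩,
        abs_of_nonpos (by linarith)]; ring
  intro s hs t ht
  rcases le_total s t with h | h
  · rw [key s hs t ht h, abs_of_nonpos (by linarith)]; ring
  · rw [dist_comm, key t ht s hs h, abs_of_nonneg (by linarith)]

/-- a point on the segment lies on the geodesic at the expected parameter. -/
lemma geodesic_param (hX : UniquelyGeodesic X) {x y p : X} {γ : ℝ → X}
    (hγ0 : γ 0 = x) (hγd : γ (dist x y) = y) (hγ : IsGeodesicOn γ (dist x y))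
    (hp : p ∈ GeodSegment x y) : γ (dist x p) = p := by
  obtain ⟨δ₁, hδ₁0, hδ₁d, hδ₁g⟩ := (hX x p).1
  obtain ⟨δ₂, hδ₂0, hδ₂d, hδ₂g⟩ := (hX p y).1
  have hsum : dist x p + dist p y = dist x y := hp
  have hxp : dist x p ≤ dist x y := by linarith [dist_nonneg (x := p) (y := y)]
  set δ : ℝ → X := fun t => if t ≤ dist x p then δ₁ t else δ₂ (t - dist x p) with hδdef
  have hglue : IsGeodesicOn δ (dist x p + dist p y) :=
    glue_geodesic dist_nonneg dist_nonneg hδ₁g hδ₂g (by rw [hδ₁d, hδ₂0])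
      (by rw [hδ₁0, hδ₂d, hsum])
  have hglue' : IsGeodesicOn δ (dist x y) := by rwa [hsum] at hglue
  have hδ0 : δ 0 = x := by simp only [hδdef, if_pos dist_nonneg, hδ₁0]
  have hδend : δ (dist x y) = y := by
    by_cases h : dist x y ≤ dist x p
    · have h1 : dist x y = dist x p := le_antisymm h hxp
      have h2 : p = y := dist_eq_zero.1 (by linarith)
      rw [h1]; simp only [hδdef, if_pos le_rfl]; rw [hδ₁d]; exact h2
    · push_neg at h
      simp only [hδdef, if_neg (not_le.2 h)]
      have : dist x y - dist x p = dist p y := by linarith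
      rw [this, hδ₂d]
  have := (hX x y).2 γ δ hγ0 hγd hγ hδ0 hδend hglue' (dist x p) ⟨dist_nonneg, hxp⟩
  rw [this]
  simp only [hδdef, if_pos le_rfl, hδ₁d]

lemma geodesic_mem_segment {γ : ℝ → X} {l : ℝ} (hγ : IsGeodesicOn γ l) {t : ℝ}
    (ht : t ∈ Icc (0:ℝ) l) : γ t ∈ GeodSegment (γ 0) (γ l) := by
  have hl : (0:ℝ) ≤ l := le_trans ht.1 ht.2
  have d1 : dist (γ 0) (γ t) = t := by
    rw [hγ 0 ⟨le_rfl, hl⟩ t ht, abs_of_nonpos (by linarith [ht.1])]; ring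
  have d2 : dist (γ t) (γ l) = l - t := by
    rw [hγ t ht l ⟨hl, le_rfl⟩, abs_of_nonpos (by linarith [ht.2])]; ring
  have d3 : dist (γ 0) (γ l) = l := by
    rw [hγ 0 ⟨le_rfl, hl⟩ l ⟨hl, le_rfl⟩, abs_of_nonpos (by linarith)]; ring
  show dist (γ 0) (γ t) + dist (γ t) (γ l) = dist (γ 0) (γ l)
  rw [d1, d2, d3]; ring

end Aux

section Between
variable {X : Type*} [MetricSpace X]

lemma betweenness_of_stronglyConvex (hX : UniquelyGeodesic X) {A : Set X}
    (hsc : StronglyConvexSet A) {x y z w : X}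
    (hxA : x ∈ A) (hyA : y ∈ A) (hzA : z ∈ A) (hwA : w ∈ A)
    (hyz : y ≠ z) (hzw : z ≠ w)
    (h1 : y ∈ GeodSegment x z) (h2 : z ∈ GeodSegment y w) :
    y ∈ GeodSegment x w ∧ z ∈ GeodSegment x w := by
  obtain ⟨γ₁, hγ₁0, hγ₁d, hγ₁g⟩ := (hX x z).1
  obtain ⟨γ₂, hγ₂0, hγ₂d, hγ₂g⟩ := (hX y w).1
  have heb : dist x y + dist y z = dist x z := h1
  have hbc : dist y z + dist z w = dist y w := h2
  set a := dist x z with hadef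
  set b := dist y z with hbdef
  set c := dist z w with hcdef
  set e := dist x y with hedef
  have hb : 0 < b := dist_pos.2 hyz
  have hc : 0 < c := dist_pos.2 hzw
  have he : 0 ≤ e := dist_nonneg
  have ha : 0 < a := by rw [← heb]; linarith
  have hy' : γ₁ e = y := geodesic_param hX hγ₁0 hγ₁d hγ₁g h1
  have hz' : γ₂ b = z := geodesic_param hX hγ₂0 hγ₂d hγ₂g h2
  have hminb : min b c ≤ b := min_le_left _ _
  have hminc : min b c ≤ c := min_le_right _ _
  -- compatibility on the common part [y,z]
  have compat : ∀ u ∈ Icc (0:ℝ) b, γ₁ (e + u) = γ₂ u := by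
    have hη : IsGeodesicOn (fun u => γ₁ (e + u)) b := by
      intro s hs t ht
      have hs' : e + s ∈ Icc (0:ℝ) a := ⟨by linarith [hs.1], by linarith [hs.2]⟩
      have ht' : e + t ∈ Icc (0:ℝ) a := ⟨by linarith [ht.1], by linarith [ht.2]⟩
      have := hγ₁g (e + s) hs' (e + t) ht'
      simpa using this
    have hγ₂r : IsGeodesicOn γ₂ b := by
      intro s hs t ht
      exact hγ₂g s ⟨hs.1, by rw [← hbc]; linarith [hs.2]⟩ t ⟨ht.1, by rw [← hbc]; linarith [ht.2]⟩
    have hend : (fun u => γ₁ (e + u)) (dist y z) = z := by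
      show γ₁ (e + dist y z) = z
      rw [← hbdef, heb]; exact hγ₁d
    have h0 : (fun u => γ₁ (e + u)) 0 = y := by show γ₁ (e + 0) = y; rw [add_zero]; exact hy'
    exact fun u hu => (hX y z).2 (fun u => γ₁ (e + u)) γ₂ h0 hend hη hγ₂0 hz' hγ₂r u hu
  set γ : ℝ → X := fun t => if t ≤ a then γ₁ t else γ₂ (t - e) with hγdef
  have hright : ∀ t, a ≤ t → γ t = γ₂ (t - e) := by
    intro t hta
    rcases eq_or_lt_of_le hta with h | h
    · have h1' : γ t = γ₁ t := by simp only [hγdef]; rw [if_pos h.ge]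
      rw [h1', ← h, hγ₁d, show a - e = b by linarith, hz']
    · simp only [hγdef]; rw [if_neg (not_le.2 h)]
  have hea : e ≤ a := by linarith
  -- local geodesic
  have hloc : IsLocalGeodesicOn γ (a + c) := by
    intro t ht
    rcases lt_trichotomy t a with hlt | heq | hgt
    · refine ⟨t - 1, a, by linarith, hlt, ?_⟩
      intro s hs s' hs'
      have hsa : s ≤ a := hs.1.2
      have hsa' : s' ≤ a := hs'.1.2
      have g1 : γ s = γ₁ s := by simp only [hγdef]; rw [if_pos hsa]
      have g2 : γ s' = γ₁ s' := by simp only [hγdef]; rw [if_pos hsa']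
      rw [g1, g2]
      exact hγ₁g s ⟨hs.2.1, hsa⟩ s' ⟨hs'.2.1, hsa'⟩
    · have hε : 0 < min b c := lt_min hb hc
      refine ⟨a - min b c, a + min b c, by rw [heq]; linarith, by rw [heq]; linarith, ?_⟩
      have hkey : ∀ s ∈ Icc (a - min b c) (a + min b c) ∩ Icc (0:ℝ) (a + c),
          γ s = γ₂ (s - e) ∧ s - e ∈ Icc (0:ℝ) (dist y w) := by
        intro s hs
        have h1s : a - min b c ≤ s := hs.1.1
        have h2s : s ≤ a + min b c := hs.1.2
        have hmem : s - e ∈ Icc (0:ℝ) (dist y w) := by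
          rw [← hbc]
          exact ⟨by linarith, by linarith⟩
        refine ⟨?_, hmem⟩
        by_cases h : s ≤ a
        · have hu : s - e ∈ Icc (0:ℝ) b := ⟨by linarith, by linarith⟩
          calc γ s = γ₁ (e + (s - e)) := by
                simp only [hγdef]; rw [if_pos h]; congr 1; ring
            _ = γ₂ (s - e) := compat (s - e) hu
        · exact hright s (by linarith)
      intro s hs s' hs'
      obtain ⟨gs, ms⟩ := hkey s hs
      obtain ⟨gs', ms'⟩ := hkey s' hs'
      rw [gs, gs', hγ₂g _ ms _ ms']
      congr 1; ring
    · refine ⟨a, t + 1, hgt, by linarith, ?_⟩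
      intro s hs s' hs'
      rw [hright s hs.1.1, hright s' hs'.1.1]
      have hms : s - e ∈ Icc (0:ℝ) (dist y w) := by
        rw [← hbc]; exact ⟨by linarith [hs.1.1], by linarith [hs.2.2]⟩
      have hms' : s' - e ∈ Icc (0:ℝ) (dist y w) := by
        rw [← hbc]; exact ⟨by linarith [hs'.1.1], by linarith [hs'.2.2]⟩
      rw [hγ₂g _ hms _ hms']
      congr 1; ring
  -- lies in A
  have hmemA : ∀ t ∈ Icc (0:ℝ) (a + c), γ t ∈ A := by
    intro t ht
    by_cases h : t ≤ a
    · have g1 : γ t = γ₁ t := by simp only [hγdef]; rw [if_pos h]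
      rw [g1]
      have hmem := geodesic_mem_segment hγ₁g (t := t) ⟨ht.1, h⟩
      rw [hγ₁0, hγ₁d] at hmem
      exact hsc.1 x hxA z hzA hmem
    · push_neg at h
      rw [hright t h.le]
      have hmemI : t - e ∈ Icc (0:ℝ) (dist y w) := by
        rw [← hbc]; exact ⟨by linarith, by linarith [ht.2]⟩
      have hmem := geodesic_mem_segment hγ₂g (t := t - e) hmemI
      rw [hγ₂0, hγ₂d] at hmem
      exact hsc.1 y hyA w hwA hmem
  have himg := hsc.2 γ (a + c) (by linarith) ⟨hloc, hmemA⟩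
  have hg0 : γ 0 = x := by simp only [hγdef]; rw [if_pos ha.le]; exact hγ₁0
  have hgend : γ (a + c) = w := by
    rw [hright (a + c) (by linarith), show a + c - e = dist y w by rw [← hbc]; linarith]
    exact hγ₂d
  rw [hg0, hgend] at himg
  constructor
  · rw [← himg]
    exact ⟨e, ⟨he, by linarith⟩, by simp only [hγdef]; rw [if_pos hea]; exact hy'⟩
  · rw [← himg]
    refine ⟨a, ⟨by linarith, by linarith⟩, ?_⟩
    simp only [hγdef]; rw [if_pos le_rfl]; exact hγ₁d

end Between

/-- If the man wins the Lion-Man game played in a compact, closed,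
strongly convex subset `A` (so `d(L_i,M_i) > D` for all `i` and
`d(L_i,M_i) → D* > D`), then for every `n` there are limit points
`l₀, lₙ, mₙ ∈ A` along (common) subsequences of `(L_i)` and `(M_i)` with
`lₙ ∈ [l₀, mₙ]`, `d(l₀, lₙ) = nD` and `d(lₙ, mₙ) = D*`. -/
theorem stmt13 {X : Type*} [MetricSpace X] [CompleteSpace X] [LocallyCompactSpace X]
    (hX : UniquelyGeodesic X)
    (A : Set X) (hne : A.Nonempty) (hclosed : IsClosed A) (hcomp : IsCompact A)
    (hsc : StronglyConvexSet A)
    (D Dstar : ℝ) (hD : 0 < D) (hDstar : D < Dstar)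
    (L M : ℕ → X) (hgame : LionManRules A D L M)
    (hfar : ∀ i, D < dist (L i) (M i))
    (hlim : Filter.Tendsto (fun i => dist (L i) (M i)) Filter.atTop (nhds Dstar)) :
    ∀ n : ℕ, ∃ l₀ ∈ A, ∃ lₙ ∈ A, ∃ mₙ ∈ A,
      (∃ φ : ℕ → ℕ, StrictMono φ ∧
        Filter.Tendsto (fun j => L (φ j)) Filter.atTop (nhds l₀)) ∧
      (∃ ψ : ℕ → ℕ, StrictMono ψ ∧
        Filter.Tendsto (fun j => L (ψ j)) Filter.atTop (nhds lₙ) ∧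
        Filter.Tendsto (fun j => M (ψ j)) Filter.atTop (nhds mₙ)) ∧
      lₙ ∈ GeodSegment l₀ mₙ ∧
      dist l₀ lₙ = n * D ∧
      dist lₙ mₙ = Dstar := by
  obtain ⟨hL0A, hMA, hseg, hstep, hMstep⟩ := hgame
  have hLA : ∀ i, L i ∈ A := by
    intro i
    induction i with
    | zero => exact hL0A
    | succ i ih => exact hsc.1 _ ih _ (hMA i) (hseg i)
  have hstepD : ∀ i, dist (L i) (L (i+1)) = D := fun i =>
    (hstep i).trans (min_eq_left (hfar i).le)
  intro n
  -- extract a common convergent subsequence for L (·+k), M (·+k), k ≤ n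
  set T := Fin (n+1) → X × X with hT
  set F : ℕ → T := fun i k => (L (i + (k:ℕ)), M (i + (k:ℕ))) with hF
  have hS : IsCompact (Set.univ.pi fun _ : Fin (n+1) => A ×ˢ A) :=
    isCompact_univ_pi fun _ => hcomp.prod hcomp
  have hFmem : ∀ i, F i ∈ Set.univ.pi fun _ : Fin (n+1) => A ×ˢ A := by
    intro i
    rw [Set.mem_univ_pi]
    exact fun k => ⟨hLA _, hMA _⟩
  obtain ⟨P, hPS, φ, hφ, hconv⟩ := hS.tendsto_subseq hFmem
  -- limit points
  set l : ℕ → X := fun k => (P ⟨min k n, Nat.lt_succ_of_le (min_le_right k n)⟩).1 with hl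
  set m : ℕ → X := fun k => (P ⟨min k n, Nat.lt_succ_of_le (min_le_right k n)⟩).2 with hm
  have hLtend : ∀ k, k ≤ n → Tendsto (fun j => L (φ j + k)) atTop (𝓝 (l k)) := by
    intro k hk
    have h1 : Tendsto (fun j => (F (φ j) ⟨min k n, Nat.lt_succ_of_le (min_le_right k n)⟩))
        atTop (𝓝 (P ⟨min k n, Nat.lt_succ_of_le (min_le_right k n)⟩)) :=
      ((continuous_apply _).tendsto P).comp hconv
    have h2 := (continuous_fst.tendsto _).comp h1
    simp only [hF] at h2
    convert h2 using 2 with j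
    simp [min_eq_left hk]
  have hMtend : ∀ k, k ≤ n → Tendsto (fun j => M (φ j + k)) atTop (𝓝 (m k)) := by
    intro k hk
    have h1 : Tendsto (fun j => (F (φ j) ⟨min k n, Nat.lt_succ_of_le (min_le_right k n)⟩))
        atTop (𝓝 (P ⟨min k n, Nat.lt_succ_of_le (min_le_right k n)⟩)) :=
      ((continuous_apply _).tendsto P).comp hconv
    have h2 := (continuous_snd.tendsto _).comp h1
    simp only [hF] at h2
    convert h2 using 2 with j
    simp [min_eq_left hk]
  have hlA : ∀ k, k ≤ n → l k ∈ A := fun k hk =>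
    hclosed.mem_of_tendsto (hLtend k hk) (Eventually.of_forall fun j => hLA _)
  have hmA : ∀ k, k ≤ n → m k ∈ A := fun k hk =>
    hclosed.mem_of_tendsto (hMtend k hk) (Eventually.of_forall fun j => hMA _)
  -- limit identities
  have hidx : ∀ k : ℕ, Tendsto (fun j => φ j + k) atTop atTop :=
    fun k => (tendsto_add_atTop_nat k).comp hφ.tendsto_atTop
  have hdistDstar : ∀ k, k ≤ n → dist (l k) (m k) = Dstar := by
    intro k hk
    have t1 : Tendsto (fun j => dist (L (φ j + k)) (M (φ j + k))) atTop
        (𝓝 (dist (l k) (m k))) := (hLtend k hk).dist (hMtend k hk)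
    have t2 : Tendsto (fun j => dist (L (φ j + k)) (M (φ j + k))) atTop (𝓝 Dstar) :=
      hlim.comp (hidx k)
    exact tendsto_nhds_unique t1 t2
  have hstepl : ∀ k, k < n → dist (l k) (l (k+1)) = D := by
    intro k hk
    have t1 : Tendsto (fun j => dist (L (φ j + k)) (L (φ j + (k+1)))) atTop
        (𝓝 (dist (l k) (l (k+1)))) := (hLtend k hk.le).dist (hLtend (k+1) hk)
    have t2 : Tendsto (fun j => dist (L (φ j + k)) (L (φ j + (k+1)))) atTop (𝓝 D) := by
      have : (fun j => dist (L (φ j + k)) (L (φ j + (k+1)))) = fun _ => D := by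
        funext j
        rw [show φ j + (k+1) = (φ j + k) + 1 by ring]
        exact hstepD _
      rw [this]
      exact tendsto_const_nhds
    exact tendsto_nhds_unique t1 t2
  have hsegl : ∀ k, k < n →
      dist (l k) (l (k+1)) + dist (l (k+1)) (m k) = dist (l k) (m k) := by
    intro k hk
    have t1 : Tendsto (fun j => dist (L (φ j + k)) (L (φ j + (k+1)))
        + dist (L (φ j + (k+1))) (M (φ j + k))) atTop
        (𝓝 (dist (l k) (l (k+1)) + dist (l (k+1)) (m k))) :=
      ((hLtend k hk.le).dist (hLtend (k+1) hk)).add ((hLtend (k+1) hk).dist (hMtend k hk.le))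
    have t2 : Tendsto (fun j => dist (L (φ j + k)) (M (φ j + k))) atTop
        (𝓝 (dist (l k) (m k))) := (hLtend k hk.le).dist (hMtend k hk.le)
    have heq : (fun j => dist (L (φ j + k)) (L (φ j + (k+1)))
        + dist (L (φ j + (k+1))) (M (φ j + k)))
        = fun j => dist (L (φ j + k)) (M (φ j + k)) := by
      funext j
      rw [show φ j + (k+1) = (φ j + k) + 1 by ring]
      exact hseg _
    rw [heq] at t1
    exact tendsto_nhds_unique t1 t2
  have hMstepl : ∀ k, k < n → dist (m k) (m (k+1)) ≤ D := by
    intro k hk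
    have t1 : Tendsto (fun j => dist (M (φ j + k)) (M (φ j + (k+1)))) atTop
        (𝓝 (dist (m k) (m (k+1)))) := (hMtend k hk.le).dist (hMtend (k+1) hk)
    refine le_of_tendsto t1 (Eventually.of_forall fun j => ?_)
    rw [show φ j + (k+1) = (φ j + k) + 1 by ring]
    exact hMstep _
  -- derived facts
  have hlm : ∀ k, k < n → dist (l (k+1)) (m k) = Dstar - D := by
    intro k hk
    have := hsegl k hk
    rw [hstepl k hk, hdistDstar k hk.le] at this
    linarith
  have hmm : ∀ k, k < n → dist (m k) (m (k+1)) = D := by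
    intro k hk
    have ht := dist_triangle (l (k+1)) (m k) (m (k+1))
    rw [hlm k hk, hdistDstar (k+1) hk] at ht
    linarith [hMstepl k hk]
  have hmbet : ∀ k, k < n → m k ∈ GeodSegment (l (k+1)) (m (k+1)) := by
    intro k hk
    show dist (l (k+1)) (m k) + dist (m k) (m (k+1)) = dist (l (k+1)) (m (k+1))
    rw [hlm k hk, hmm k hk, hdistDstar (k+1) hk]
    ring
  -- main induction
  have claim : ∀ k, k ≤ n → l k ∈ GeodSegment (l 0) (m k) ∧ dist (l 0) (l k) = k * D := by
    intro k
    induction k with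
    | zero =>
      intro _
      constructor
      · show dist (l 0) (l 0) + dist (l 0) (m 0) = dist (l 0) (m 0)
        simp
      · simp
    | succ k ih =>
      intro hk1
      have hk : k < n := hk1
      obtain ⟨ihb, ihd⟩ := ih hk.le
      have e1 : dist (l 0) (l k) + dist (l k) (m k) = dist (l 0) (m k) := ihb
      have e2 : dist (l k) (l (k+1)) + dist (l (k+1)) (m k) = dist (l k) (m k) := hsegl k hk
      have t1 : dist (l 0) (l (k+1)) ≤ dist (l 0) (l k) + dist (l k) (l (k+1)) :=
        dist_triangle _ _ _
      have t2 : dist (l 0) (m k) ≤ dist (l 0) (l (k+1)) + dist (l (k+1)) (m k) :=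
        dist_triangle _ _ _
      have hA' : dist (l 0) (l (k+1)) = dist (l 0) (l k) + dist (l k) (l (k+1)) :=
        le_antisymm t1 (by linarith)
      have hB : l (k+1) ∈ GeodSegment (l 0) (m k) := by
        show dist (l 0) (l (k+1)) + dist (l (k+1)) (m k) = dist (l 0) (m k)
        linarith
      have hd : dist (l 0) (l (k+1)) = ((k+1 : ℕ)) * D := by
        rw [hA', ihd, hstepl k hk]
        push_cast
        ring
      have hne1 : l (k+1) ≠ m k := by
        intro h
        have := hlm k hk
        rw [h, dist_self] at this
        linarith
      have hne2 : m k ≠ m (k+1) := by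
        intro h
        have := hmm k hk
        rw [h, dist_self] at this
        linarith
      have hbet := betweenness_of_stronglyConvex hX hsc (hlA 0 (Nat.zero_le n))
        (hlA (k+1) hk1) (hmA k hk.le) (hmA (k+1) hk1) hne1 hne2 hB (hmbet k hk)
      exact ⟨hbet.1, hd⟩
  -- assemble
  refine ⟨l 0, hlA 0 (Nat.zero_le n), l n, hlA n le_rfl, m n, hmA n le_rfl, ?_, ?_, ?_, ?_, ?_⟩
  · exact ⟨φ, hφ, by simpa using hLtend 0 (Nat.zero_le n)⟩
  · exact ⟨fun j => φ j + n, hφ.add_const n, hLtend n le_rfl, hMtend n le_rfl⟩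
  · exact (claim n le_rfl).1
  · exact (claim n le_rfl).2
  · exact hdistDstar n le_rfl
end
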